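/- arXiv:1405.7014 — 13 statements merged into one kernel-verified Lean document; each statement's English description precedes it below -/
import Mathlib

section
/- Let Λ be an n-dimensional lattice in ℝ^m (the set of integer linear combinations of n linearly independent vectors in ℝ^m), let Vor(Λ) = {x ∈ ℝ^m : ∀ v ∈ Λ, ‖x‖ ≤ ‖x − v‖} be its Voronoi cell, let t ∈ ℝ^m and r > 0. Then the number of lattice points of Λ contained in the scaled and translated Voronoi cell r·Vor(Λ) + t is at most (⌊r⌋ + 1)^n, where ⌊r⌋ + 1 is the smallest integer strictly larger than r. -/
/-!
Put `k = ⌊r⌋ + 1 > r`. Two lattice points `x = r • w + t`, `y = r • w' + t` of the scaled cell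
whose coordinates agree modulo `k` satisfy `x - y = k • v` with `v ∈ Λ`, i.e.
`v = c • (w - w')` with `c = r / k ∈ (0, 1)`. Testing `w ∈ Vor(Λ)` against `v` and `w' ∈ Vor(Λ)`
against `-v` gives `‖w‖ ≤ ‖(1 - c) • w + c • w'‖` and the symmetric inequality, so `‖w‖ = ‖w'‖`,
and strict convexity of the Euclidean norm forces `w = w'`. Hence reduction of coordinates
modulo `k` is injective on the lattice points of the cell, and there are at most `k ^ n` of them.
-/

open Set

section Voronoi

variable {E : Type*} [NormedAddCommGroup E] [NormedSpace ℝ E]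

def voronoiCell (L : Set E) : Set E :=
  {x | ∀ v ∈ L, ‖x‖ ≤ ‖x - v‖}

theorem norm_le_norm_of_le_norm_lineMap {w w' : E} {c : ℝ} (hc₀ : 0 < c) (hc₁ : c ≤ 1)
    (h : ‖w‖ ≤ ‖(1 - c) • w + c • w'‖) : ‖w‖ ≤ ‖w'‖ := by
  refine le_of_mul_le_mul_left ?_ hc₀
  calc c * ‖w‖ = ‖w‖ - (1 - c) * ‖w‖ := by ring
    _ ≤ ‖(1 - c) • w + c • w'‖ - ‖(1 - c) • w‖ := by
        rw [norm_smul, Real.norm_of_nonneg (sub_nonneg.mpr hc₁)]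
        gcongr
    _ ≤ ‖c • w'‖ := by linarith [norm_add_le ((1 - c) • w) (c • w')]
    _ = c * ‖w'‖ := by rw [norm_smul, Real.norm_of_nonneg hc₀.le]

theorem norm_le_norm_lineMap_of_mem_voronoiCell {L : Set E} {w w' : E}
    (hw : w ∈ voronoiCell L) {c : ℝ} (hv : c • (w - w') ∈ L) :
    ‖w‖ ≤ ‖(1 - c) • w + c • w'‖ := by
  convert hw _ hv using 2
  module

theorem eq_of_mem_voronoiCell_of_smul_sub_mem [StrictConvexSpace ℝ E] {L : AddSubgroup E}
    {w w' : E} (hw : w ∈ voronoiCell L) (hw' : w' ∈ voronoiCell L) {c : ℝ} (hc₀ : 0 < c)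
    (hc₁ : c < 1) (hv : c • (w - w') ∈ L) : w = w' := by
  have hv' : c • (w' - w) ∈ L := by
    rw [← neg_sub, smul_neg]
    exact neg_mem hv
  have hcombo := norm_le_norm_lineMap_of_mem_voronoiCell hw hv
  have hge := norm_le_norm_of_le_norm_lineMap hc₀ hc₁.le
    (norm_le_norm_lineMap_of_mem_voronoiCell hw' hv')
  by_contra hne
  exact hcombo.not_gt <| norm_combo_lt_of_ne le_rfl hge hne (sub_pos.mpr hc₁) hc₀ (by ring)

theorem eq_of_mem_voronoiCell_of_smul_sub_eq_nsmul [StrictConvexSpace ℝ E] {L : AddSubgroup E}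
    {w w' : E} (hw : w ∈ voronoiCell L) (hw' : w' ∈ voronoiCell L) {r : ℝ} {k : ℕ}
    (hr : 0 < r) (hrk : r < k) {v : E} (hv : v ∈ L) (h : r • (w - w') = k • v) : w = w' := by
  have hk : (0 : ℝ) < k := hr.trans hrk
  refine eq_of_mem_voronoiCell_of_smul_sub_mem hw hw' (div_pos hr hk) ((div_lt_one hk).mpr hrk) ?_
  convert hv using 1
  rw [div_eq_inv_mul, mul_smul, h, ← Nat.cast_smul_eq_nsmul ℝ, inv_smul_smul₀ hk.ne']

end Voronoi

theorem finite_and_ncard_le_pow_of_sub_eq_map_nsmul {ι G : Type*} [Fintype ι] [AddCommGroup G]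
    (f : (ι → ℤ) →+ G) (k : ℕ) [NeZero k] (S : Set G) (hS : S ⊆ f.range)
    (hsep : ∀ x ∈ S, ∀ y ∈ S, ∀ u, x - y = f (k • u) → x = y) :
    S.Finite ∧ S.ncard ≤ k ^ Fintype.card ι := by
  let reduce : G → (ι → ZMod k) := fun x i => (Function.invFun f x i : ZMod k)
  have hinj : InjOn reduce S := by
    intro x hx y hy hxy
    have hcong : ∀ i, (k : ℤ) ∣ Function.invFun f x i - Function.invFun f y i := fun i =>
      (ZMod.intCast_eq_intCast_iff_dvd_sub _ _ _).mp (congrFun hxy i).symm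
    choose u hu using hcong
    refine hsep x hx y hy u ?_
    rw [← Function.invFun_eq (hS hx), ← Function.invFun_eq (hS hy), ← map_sub]
    congr 1
    ext i
    simp [hu i]
  refine ⟨.of_finite_image (toFinite _) hinj, ?_⟩
  calc S.ncard ≤ (univ : Set (ι → ZMod k)).ncard :=
        ncard_le_ncard_of_injOn reduce (fun _ _ => mem_univ _) hinj
    _ = k ^ Fintype.card ι := by simp [ncard_univ, Nat.card_fun, Nat.card_eq_fintype_card]

theorem lattice_points_in_scaled_voronoi_cell_general
    (n m : ℕ) (b : Fin n → EuclideanSpace ℝ (Fin m))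
    (Λ : Set (EuclideanSpace ℝ (Fin m)))
    (hΛ : Λ = {x | ∃ u : Fin n → ℤ, x = ∑ i, (u i : ℝ) • b i})
    (Vor : Set (EuclideanSpace ℝ (Fin m)))
    (hVor : Vor = {x | ∀ v ∈ Λ, ‖x‖ ≤ ‖x - v‖})
    (t : EuclideanSpace ℝ (Fin m)) (r : ℝ) (hr : 0 < r) :
    {x ∈ Λ | ∃ w ∈ Vor, x = r • w + t}.Finite ∧
      {x ∈ Λ | ∃ w ∈ Vor, x = r • w + t}.ncard ≤ (⌊r⌋₊ + 1) ^ n := by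
  let f := (Fintype.linearCombination ℤ b).toAddMonoidHom
  have hΛf : Λ = f.range := by
    ext x
    simp [hΛ, f, Fintype.linearCombination_apply, Int.cast_smul_eq_zsmul, eq_comm]
  have hrk : r < ((⌊r⌋₊ + 1 : ℕ) : ℝ) := by
    push_cast
    exact Nat.lt_floor_add_one r
  subst hVor
  simpa using finite_and_ncard_le_pow_of_sub_eq_map_nsmul f (⌊r⌋₊ + 1) _ (fun x hx => hΛf ▸ hx.1) <| by
    rintro _ ⟨-, w, hw, rfl⟩ _ ⟨-, w', hw', rfl⟩ u hxy
    rw [hΛf] at hw hw'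
    rw [eq_of_mem_voronoiCell_of_smul_sub_eq_nsmul hw hw' hr hrk ⟨u, rfl⟩ <| by
      rw [← map_nsmul, ← hxy, smul_sub]; abel]

/-- The number of lattice points of an `n`-dimensional lattice `Λ ⊆ ℝ^m`
inside the scaled and translated Voronoi cell `r·Vor(Λ) + t` is at most `(⌊r⌋ + 1)^n`. -/
theorem lattice_points_in_scaled_voronoi_cell
    (n m : ℕ) (b : Fin n → EuclideanSpace ℝ (Fin m))
    (hb : LinearIndependent ℝ b)
    (Λ : Set (EuclideanSpace ℝ (Fin m)))
    (hΛ : Λ = {x | ∃ u : Fin n → ℤ, x = ∑ i, (u i : ℝ) • b i})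
    (Vor : Set (EuclideanSpace ℝ (Fin m)))
    (hVor : Vor = {x | ∀ v ∈ Λ, ‖x‖ ≤ ‖x - v‖})
    (t : EuclideanSpace ℝ (Fin m)) (r : ℝ) (hr : 0 < r) :
    {x ∈ Λ | ∃ w ∈ Vor, x = r • w + t}.Finite ∧
      {x ∈ Λ | ∃ w ∈ Vor, x = r • w + t}.ncard ≤ (⌊r⌋₊ + 1) ^ n :=
  lattice_points_in_scaled_voronoi_cell_general n m b Λ hΛ Vor hVor t r hr
end

section
/- Let Λ be an n-dimensional lattice in ℝ^m with packing radius ρ (half the minimum Euclidean norm of a nonzero lattice point), let t ∈ ℝ^m and r > 0. Then the number of lattice points of Λ contained in the closed Euclidean ball of radius r centered at t is at most (⌊r/ρ⌋ + 1)^n, where ⌊r/ρ⌋ + 1 is the smallest integer strictly larger than r/ρ. -/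
/-!
Put `N = ⌊r/ρ⌋ + 1`, so that `r < Nρ`. Two lattice points in the ball whose coefficient vectors
agree modulo `N` differ by `N z` with `z` in the lattice, and `‖N z‖ ≤ 2r < 2Nρ` forces `z = 0`.
Hence reducing coefficients modulo `N` is injective on the lattice points in the ball, which
gives at most `N^n` of them.
-/

lemma norm_sub_lt_of_mem_closedBall {E : Type*} [SeminormedAddCommGroup E] {ρ r : ℝ} (hρ : 0 < ρ)
    {t x y : E} (hx : x ∈ Metric.closedBall t r) (hy : y ∈ Metric.closedBall t r) :
    ‖x - y‖ < (⌊r / ρ⌋₊ + 1 : ℕ) * (2 * ρ) := by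
  have hr : r < (⌊r / ρ⌋₊ + 1 : ℕ) * ρ := by
    rw [← div_lt_iff₀ hρ]; exact_mod_cast Nat.lt_floor_add_one (r / ρ)
  calc ‖x - y‖ = dist x y := (dist_eq_norm x y).symm
    _ ≤ dist x t + dist y t := dist_triangle_right x y t
    _ ≤ r + r := add_le_add hx hy
    _ < _ := by linarith

section IntCombinations

variable {E ι : Type*} [NormedAddCommGroup E] [NormedSpace ℝ E] [Fintype ι]

def intCombinations (b : ι → E) : Set E := {x | ∃ u : ι → ℤ, x = ∑ i, (u i : ℝ) • b i}

lemma exists_intCombination_sub_eq_smul (b : ι → E) {N : ℕ} {u v : ι → ℤ}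
    (huv : ∀ i, (u i : ZMod N) = v i) :
    ∃ w : ι → ℤ, ∑ i, (u i : ℝ) • b i - ∑ i, (v i : ℝ) • b i = (N : ℝ) • ∑ i, (w i : ℝ) • b i := by
  have hdvd i : (N : ℤ) ∣ u i - v i := (ZMod.intCast_eq_intCast_iff_dvd_sub _ _ _).mp (huv i).symm
  choose w hw using hdvd
  refine ⟨w, ?_⟩
  simp only [Finset.smul_sum, smul_smul, ← Finset.sum_sub_distrib, ← sub_smul]
  refine Finset.sum_congr rfl fun i _ => ?_
  exact_mod_cast congrArg (· • b i) (congrArg (fun k : ℤ => (k : ℝ)) (hw i))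

lemma eq_of_sub_eq_smul_of_norm_sub_lt {Λ : Set E} {δ : ℝ} (hmin : ∀ z ∈ Λ, z ≠ 0 → δ ≤ ‖z‖)
    {N : ℕ} {x y z : E} (hz : z ∈ Λ) (hxyz : x - y = (N : ℝ) • z) (hxy : ‖x - y‖ < N * δ) :
    x = y := by
  by_contra hne
  have hz0 : z ≠ 0 := by rintro rfl; simp [sub_eq_zero, hne] at hxyz
  have : (N : ℝ) * δ ≤ ‖x - y‖ := by
    rw [hxyz, norm_smul, Real.norm_natCast]
    exact mul_le_mul_of_nonneg_left (hmin z hz hz0) N.cast_nonneg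
  linarith

lemma ncard_le_pow_of_norm_sub_lt {b : ι → E} {δ : ℝ}
    (hmin : ∀ z ∈ intCombinations b, z ≠ 0 → δ ≤ ‖z‖) {N : ℕ} [NeZero N] {S : Set E}
    (hS : S ⊆ intCombinations b) (hdiam : ∀ x ∈ S, ∀ y ∈ S, ‖x - y‖ < N * δ) :
    S.Finite ∧ S.ncard ≤ N ^ Fintype.card ι := by
  choose u hu using fun x : S => hS x.2
  let g : S → ι → ZMod N := fun x i => u x i
  have hg : Function.Injective g := fun x y hxy => by
    obtain ⟨w, hw⟩ := exists_intCombination_sub_eq_smul b (congrFun hxy)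
    rw [← hu, ← hu] at hw
    exact Subtype.ext <| eq_of_sub_eq_smul_of_norm_sub_lt hmin ⟨w, rfl⟩ hw (hdiam _ x.2 _ y.2)
  have : Finite S := .of_injective g hg
  refine ⟨S.toFinite, ?_⟩
  calc S.ncard = Nat.card S := (Nat.card_coe_set_eq S).symm
    _ ≤ Nat.card (ι → ZMod N) := Nat.card_le_card_of_injective g hg
    _ = N ^ Fintype.card ι := by simp [Nat.card_fun]

end IntCombinations

theorem lattice_points_in_ball_general
    (n m : ℕ) (b : Fin n → EuclideanSpace ℝ (Fin m))
    (Λ : Set (EuclideanSpace ℝ (Fin m)))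
    (hΛ : Λ = {x | ∃ u : Fin n → ℤ, x = ∑ i, (u i : ℝ) • b i})
    (ρ : ℝ)
    (hρ : IsLeast {s : ℝ | ∃ x ∈ Λ, x ≠ 0 ∧ s = ‖x‖} (2 * ρ))
    (t : EuclideanSpace ℝ (Fin m)) (r : ℝ) :
    (Λ ∩ Metric.closedBall t r).Finite ∧
      (Λ ∩ Metric.closedBall t r).ncard ≤ (⌊r / ρ⌋₊ + 1) ^ n := by
  change Λ = intCombinations b at hΛ
  subst hΛ
  have hmin : ∀ z ∈ intCombinations b, z ≠ 0 → 2 * ρ ≤ ‖z‖ := fun z hz hz0 => hρ.2 ⟨z, hz, hz0, rfl⟩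
  have hρ0 : 0 < ρ := by
    obtain ⟨x, -, hx0, hx⟩ := hρ.1
    linarith [norm_pos_iff.mpr hx0]
  simpa using ncard_le_pow_of_norm_sub_lt hmin Set.inter_subset_left
    fun x hx y hy => norm_sub_lt_of_mem_closedBall hρ0 hx.2 hy.2

/-- The number of lattice points of an `n`-dimensional lattice `Λ ⊆ ℝ^m` with
packing radius `ρ` inside a closed ball of radius `r` centered at `t` is at most
`(⌊r/ρ⌋ + 1)^n`. -/
theorem lattice_points_in_ball
    (n m : ℕ) (b : Fin n → EuclideanSpace ℝ (Fin m))
    (hb : LinearIndependent ℝ b)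
    (Λ : Set (EuclideanSpace ℝ (Fin m)))
    (hΛ : Λ = {x | ∃ u : Fin n → ℤ, x = ∑ i, (u i : ℝ) • b i})
    (ρ : ℝ)
    (hρ : IsLeast {s : ℝ | ∃ x ∈ Λ, x ≠ 0 ∧ s = ‖x‖} (2 * ρ))
    (t : EuclideanSpace ℝ (Fin m)) (r : ℝ) (hr : 0 < r) :
    (Λ ∩ Metric.closedBall t r).Finite ∧
      (Λ ∩ Metric.closedBall t r).ncard ≤ (⌊r / ρ⌋₊ + 1) ^ n :=
  lattice_points_in_ball_general n m b Λ hΛ ρ hρ t r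
end

section
/- Let Λ be a lattice in ℝ^m, y ∈ ℝ^m, and x ∈ Λ. Then x is a closest lattice point to y (i.e., ‖y − x‖ ≤ ‖y − x'‖ for all x' ∈ Λ) if and only if ⟨y − x, v⟩ ≤ (1/2)⟨v, v⟩ for every relevant vector v of Λ. -/
open scoped RealInnerProductSpace

/-!
`x` is closest to `y` iff `‖y - x‖ ≤ ‖(y - x) - w‖` for every `w ∈ Λ`, which unfolds to the
Voronoi inequality `⟪y - x, w⟫ ≤ ⟪w, w⟫ / 2`; so only the reverse implication needs work. Lattice
points violating that inequality have norm at most `2‖y - x‖`, so there are finitely many, and a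
violator of minimal norm is a relevant vector: otherwise a witness `u` with `⟪w, u⟫ > ⟪u, u⟫`
would make `u` or `w - u` a strictly shorter violator.
-/

section Voronoi

variable {E : Type*} [NormedAddCommGroup E] [InnerProductSpace ℝ E]

def IsRelevant (L : AddSubgroup E) (v : E) : Prop :=
  v ∈ L ∧ v ≠ 0 ∧ ∀ w ∈ L, ⟪v, w⟫ ≤ ⟪w, w⟫

theorem norm_le_norm_sub_iff_inner_le (z w : E) :
    ‖z‖ ≤ ‖z - w‖ ↔ ⟪z, w⟫ ≤ 1 / 2 * ⟪w, w⟫ := by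
  rw [← pow_le_pow_iff_left₀ (norm_nonneg z) (norm_nonneg (z - w)) two_ne_zero,
    norm_sub_sq_real, real_inner_self_eq_norm_sq]
  constructor <;> intro h <;> linarith

theorem forall_norm_le_norm_sub_iff {L : AddSubgroup E} {x : E} (hx : x ∈ L) (y : E) :
    (∀ x' ∈ L, ‖y - x‖ ≤ ‖y - x'‖) ↔ ∀ w ∈ L, ⟪y - x, w⟫ ≤ 1 / 2 * ⟪w, w⟫ := by
  simp_rw [← norm_le_norm_sub_iff_inner_le]
  constructor
  · intro h w hw
    simpa [sub_sub] using h (x + w) (L.add_mem hx hw)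
  · intro h x' hx'
    simpa using h (x' - x) (L.sub_mem hx' hx)

theorem isRelevant_of_isMin_norm {L : AddSubgroup E} {z w : E} (hw : w ∈ L)
    (hzw : 1 / 2 * ⟪w, w⟫ < ⟪z, w⟫)
    (hmin : ∀ u ∈ L, 1 / 2 * ⟪u, u⟫ < ⟪z, u⟫ → ‖w‖ ≤ ‖u‖) : IsRelevant L w := by
  refine ⟨hw, fun h0 => by simp [h0] at hzw, fun u hu => ?_⟩
  by_contra! hwu
  have hww := real_inner_self_eq_norm_sq w
  have huu := real_inner_self_eq_norm_sq u
  have hu_lt : ‖u‖ < ‖w‖ := by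
    nlinarith [real_inner_le_norm w u, norm_nonneg u, norm_nonneg w]
  have hwu_lt : ‖w - u‖ < ‖w‖ := by
    have := norm_sub_sq_real w u
    nlinarith [norm_nonneg (w - u), norm_nonneg w]
  -- `f v := ⟪z, v⟫ - ⟪v, v⟫ / 2` satisfies `f u + f (w - u) = f w + ⟪w, u⟫ - ⟪u, u⟫ > 0`.
  have hsplit : 1 / 2 * ⟪u, u⟫ < ⟪z, u⟫ ∨ 1 / 2 * ⟪w - u, w - u⟫ < ⟪z, w - u⟫ := by
    by_contra! h
    rw [inner_sub_right, real_inner_self_eq_norm_sq (w - u), norm_sub_sq_real] at h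
    linarith [h.1, h.2]
  rcases hsplit with hu' | hwu'
  · exact hu_lt.not_ge (hmin u hu hu')
  · exact hwu_lt.not_ge (hmin (w - u) (L.sub_mem hw hu) hwu')

theorem inner_le_of_forall_isRelevant {L : AddSubgroup E}
    (hL : ∀ R, (Metric.closedBall (0 : E) R ∩ L).Finite) {z : E}
    (h : ∀ v, IsRelevant L v → ⟪z, v⟫ ≤ 1 / 2 * ⟪v, v⟫) :
    ∀ w ∈ L, ⟪z, w⟫ ≤ 1 / 2 * ⟪w, w⟫ := by
  by_contra! hS
  set S := {w | w ∈ L ∧ 1 / 2 * ⟪w, w⟫ < ⟪z, w⟫}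
  have hSfin : S.Finite := by
    refine (hL (2 * ‖z‖)).subset fun w ⟨hw, hzw⟩ => ⟨?_, hw⟩
    rw [mem_closedBall_zero_iff]
    rw [real_inner_self_eq_norm_sq] at hzw
    nlinarith [real_inner_le_norm z w, norm_nonneg w, norm_nonneg z]
  obtain ⟨w, ⟨hw, hzw⟩, hmin⟩ := S.exists_min_image (‖·‖) hSfin hS
  exact (h w (isRelevant_of_isMin_norm hw hzw fun u hu hzu => hmin u ⟨hu, hzu⟩)).not_gt hzw

end Voronoi

open Submodule Metric in
theorem LinearIndependent.finite_closedBall_inter_span_int {ι E : Type*} [Finite ι]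
    [NormedAddCommGroup E] [NormedSpace ℝ E] {b : ι → E} (hb : LinearIndependent ℝ b) (R : ℝ) :
    (closedBall (0 : E) R ∩ span ℤ (Set.range b)).Finite := by
  set F := span ℝ (Set.range b)
  set b' := Module.Basis.span hb
  have := b'.finiteDimensional_of_finite
  have := FiniteDimensional.proper_real F
  have hrange : Set.range b = F.subtype.restrictScalars ℤ '' Set.range b' := by
    rw [← Set.range_comp]
    exact congrArg Set.range (funext fun i => by simp [b', Module.Basis.span_apply])
  refine ((ZSpan.setFinite_inter b' (isBounded_closedBall (x := 0) (r := R))).image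
    F.subtype).subset ?_
  rintro x ⟨hxR, hx⟩
  rw [SetLike.mem_coe, hrange, span_image, mem_map] at hx
  obtain ⟨x', hx', rfl⟩ := hx
  exact ⟨x', ⟨by simpa using hxR, hx'⟩, rfl⟩

theorem coe_span_int_range_eq {ι E : Type*} [Fintype ι] [AddCommGroup E] [Module ℝ E]
    (b : ι → E) :
    (Submodule.span ℤ (Set.range b) : Set E) = {x | ∃ u : ι → ℤ, x = ∑ i, (u i : ℝ) • b i} := by
  ext x
  simp only [SetLike.mem_coe, Submodule.mem_span_range_iff_exists_fun, Set.mem_ofPred_eq,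
    Int.cast_smul_eq_zsmul, eq_comm]

/-- `x ∈ Λ` is a closest lattice point to `y` if and only if
`⟨y − x, v⟩ ≤ (1/2)⟨v, v⟩` for every relevant vector `v` of `Λ`. -/
theorem closest_point_iff_relevant_vectors
    (n m : ℕ) (b : Fin n → EuclideanSpace ℝ (Fin m))
    (hb : LinearIndependent ℝ b)
    (Λ : Set (EuclideanSpace ℝ (Fin m)))
    (hΛ : Λ = {x | ∃ u : Fin n → ℤ, x = ∑ i, (u i : ℝ) • b i})
    (y x : EuclideanSpace ℝ (Fin m)) (hx : x ∈ Λ) :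
    (∀ x' ∈ Λ, ‖y - x‖ ≤ ‖y - x'‖) ↔
      (∀ v : EuclideanSpace ℝ (Fin m),
        (v ∈ Λ ∧ v ≠ 0 ∧ ∀ w ∈ Λ, ⟪v, w⟫ ≤ ⟪w, w⟫) →
        ⟪y - x, v⟫ ≤ (1 / 2) * ⟪v, v⟫) := by
  set L := (Submodule.span ℤ (Set.range b)).toAddSubgroup
  obtain rfl : Λ = L := hΛ.trans (coe_span_int_range_eq b).symm
  refine (forall_norm_le_norm_sub_iff hx y).trans
    ⟨fun h v hv => h v hv.1, inner_le_of_forall_isRelevant hb.finite_closedBall_inter_span_int⟩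
end

section
/- Let Λ be a lattice in ℝ^m, y ∈ ℝ^m, and x ∈ Λ. If x is not a closest lattice point to y, then there exists a relevant vector v of Λ such that ‖y − x − v‖ < ‖y − x‖. Consequently, in the iteration x_{k+1} = x_k + v_k with v_k a minimizer of ‖y − x_k − v‖ over v in R(Λ) ∪ {0}, either x_k is a closest lattice point to y or ‖y − x_k‖ > ‖y − x_{k+1}‖. -/
/-!
Translate so that the current point is `0` and the target is `z = y - x`. Among the lattice
points strictly closer to `z` than `0` (finitely many, since the lattice is discrete), one of
least norm `w` is a relevant vector: if `⟪u, u⟫ < ⟪w, u⟫` for some lattice point `u`, then `u`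
and `w - u` are both shorter than `w`, while
`‖z - u‖² + ‖z - (w - u)‖² = ‖z‖² + ‖z - w‖² + 2 (⟪u, u⟫ - ⟪w, u⟫) < 2 ‖z‖²`
puts one of them closer to `z` than `0`. The iteration statement follows since a minimizing
`v_k` does at least as well as this relevant vector.
-/

open scoped RealInnerProductSpace

/-- A relevant vector of the lattice `Λ`: a nonzero lattice point `v` with
`⟨v, x⟩ ≤ ⟨x, x⟩` for all `x ∈ Λ`. -/
def IsRelevantVector {E : Type*} [NormedAddCommGroup E] [InnerProductSpace ℝ E]
    (Λ : Set E) (v : E) : Prop :=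
  v ∈ Λ ∧ v ≠ 0 ∧ ∀ x ∈ Λ, ⟪v, x⟫ ≤ ⟪x, x⟫

open Set Submodule

theorem setOf_exists_sum_intCast_smul_eq_span {ι E : Type*} [Fintype ι] [AddCommGroup E]
    [Module ℝ E] (b : ι → E) :
    {x | ∃ u : ι → ℤ, x = ∑ i, (u i : ℝ) • b i} = (span ℤ (range b) : Set E) := by
  ext x
  simp only [mem_ofPred_eq, SetLike.mem_coe, mem_span_range_iff_exists_fun,
    Int.cast_smul_eq_zsmul, eq_comm]

theorem LinearIndependent.setFinite_inter_span_int {ι E : Type*} [Finite ι]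
    [NormedAddCommGroup E] [NormedSpace ℝ E] {b : ι → E} (hb : LinearIndependent ℝ b)
    {s : Set E} (hs : Bornology.IsBounded s) : (s ∩ span ℤ (range b)).Finite := by
  let W := span ℝ (range b)
  have : FiniteDimensional ℝ W := FiniteDimensional.span_of_finite ℝ (finite_range b)
  have hspan : (span ℤ (range b) : Set E) =
      Subtype.val '' (span ℤ (range (Module.Basis.span hb)) : Set W) := by
    have hrange : W.subtype.restrictScalars ℤ '' range (Module.Basis.span hb) = range b := by
      rw [← range_comp]
      exact congrArg range (funext fun i => Module.Basis.coe_span_apply hb i)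
    calc (span ℤ (range b) : Set E)
        = span ℤ (W.subtype.restrictScalars ℤ '' range (Module.Basis.span hb)) := by rw [hrange]
      _ = _ := by rw [← Submodule.map_span, Submodule.map_coe]; rfl
  have hs' : Bornology.IsBounded (Subtype.val ⁻¹' s : Set W) := by
    obtain ⟨R, hR⟩ := hs.subset_closedBall 0
    exact (Metric.isBounded_closedBall (x := (0 : W)) (r := R)).subset fun w hw => by
      simpa using hR hw
  refine ((ZSpan.setFinite_inter (Module.Basis.span hb) hs').image Subtype.val).subset ?_
  rintro x ⟨hxs, hx⟩
  rw [hspan] at hx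
  obtain ⟨w, hw, rfl⟩ := hx
  exact ⟨w, ⟨hxs, hw⟩, rfl⟩

section InnerProductSpace

variable {E : Type*} [NormedAddCommGroup E] [InnerProductSpace ℝ E]

theorem norm_sub_sq_add_norm_sub_sub_sq (z w x : E) :
    ‖z - x‖ ^ 2 + ‖z - (w - x)‖ ^ 2 = ‖z‖ ^ 2 + ‖z - w‖ ^ 2 + 2 * (⟪x, x⟫ - ⟪w, x⟫) := by
  rw [norm_sub_sq_real z x, norm_sub_sq_real z (w - x), norm_sub_sq_real w x,
    norm_sub_sq_real z w, inner_sub_right, real_inner_self_eq_norm_sq]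
  ring

theorem norm_lt_and_norm_sub_lt_of_inner_self_lt {w x : E} (h : ⟪x, x⟫ < ⟪w, x⟫) :
    ‖x‖ < ‖w‖ ∧ ‖w - x‖ < ‖w‖ := by
  have hsum : ‖x‖ ^ 2 + ‖w - x‖ ^ 2 < ‖w‖ ^ 2 := by
    rw [norm_sub_sq_real, ← real_inner_self_eq_norm_sq x]
    linarith
  constructor <;> refine (sq_lt_sq₀ (norm_nonneg _) (norm_nonneg _)).1 ?_ <;>
    nlinarith [sq_nonneg ‖x‖, sq_nonneg ‖w - x‖]

theorem isRelevantVector_of_forall_norm_le {Λ : AddSubgroup E} {z w : E} (hw : w ∈ Λ)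
    (hzw : ‖z - w‖ < ‖z‖) (hmin : ∀ u ∈ Λ, ‖z - u‖ < ‖z‖ → ‖w‖ ≤ ‖u‖) :
    IsRelevantVector (Λ : Set E) w := by
  refine ⟨hw, fun h => by simp [h] at hzw, fun x hx => not_lt.1 fun hlt => ?_⟩
  obtain ⟨hx_lt, hwx_lt⟩ := norm_lt_and_norm_sub_lt_of_inner_self_lt hlt
  have hsq : ‖z - x‖ ^ 2 + ‖z - (w - x)‖ ^ 2 < ‖z‖ ^ 2 + ‖z‖ ^ 2 := by
    have := (sq_lt_sq₀ (norm_nonneg _) (norm_nonneg _)).2 hzw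
    rw [norm_sub_sq_add_norm_sub_sub_sq]
    linarith
  rcases lt_or_ge (‖z - x‖ ^ 2) (‖z‖ ^ 2) with hx_closer | hx_far
  · exact (hmin x hx ((sq_lt_sq₀ (norm_nonneg _) (norm_nonneg _)).1 hx_closer)).not_gt hx_lt
  · have : ‖z - (w - x)‖ < ‖z‖ := (sq_lt_sq₀ (norm_nonneg _) (norm_nonneg _)).1 (by linarith)
    exact (hmin (w - x) (sub_mem hw hx) this).not_gt hwx_lt

theorem exists_isRelevantVector_norm_sub_lt {Λ : AddSubgroup E}
    (hΛ : ∀ s : Set E, Bornology.IsBounded s → (s ∩ Λ).Finite) {z w : E} (hw : w ∈ Λ)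
    (hzw : ‖z - w‖ < ‖z‖) : ∃ v, IsRelevantVector (Λ : Set E) v ∧ ‖z - v‖ < ‖z‖ := by
  set S := {u | ‖z - u‖ < ‖z‖} ∩ (Λ : Set E)
  have hS : S.Finite := hΛ _ <| (Metric.isBounded_ball (x := z) (r := ‖z‖)).subset
    fun u hu => by simpa [dist_eq_norm, norm_sub_rev] using hu
  obtain ⟨v, ⟨hzv, hv⟩, hmin⟩ := S.exists_min_image norm hS ⟨w, hzw, hw⟩
  exact ⟨v, isRelevantVector_of_forall_norm_le hv hzv fun u hu hzu => hmin u ⟨hzu, hu⟩, hzv⟩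

end InnerProductSpace

/-- If `x ∈ Λ` is not a closest lattice point to `y`, then some relevant
vector `v` satisfies `‖y − x − v‖ < ‖y − x‖`.  Consequently, in the iteration
`x_{k+1} = x_k + v_k` with `v_k` a minimizer of `‖y − x_k − v‖` over `v ∈ R(Λ) ∪ {0}`,
either `x_k` is a closest lattice point to `y` or `‖y − x_k‖ > ‖y − x_{k+1}‖`. -/
theorem relevant_vector_strict_decrease
    (n m : ℕ) (b : Fin n → EuclideanSpace ℝ (Fin m))
    (hb : LinearIndependent ℝ b)
    (Λ : Set (EuclideanSpace ℝ (Fin m)))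
    (hΛ : Λ = {x | ∃ u : Fin n → ℤ, x = ∑ i, (u i : ℝ) • b i})
    (y : EuclideanSpace ℝ (Fin m)) :
    (∀ x ∈ Λ, ¬(∀ x' ∈ Λ, ‖y - x‖ ≤ ‖y - x'‖) →
      ∃ v, IsRelevantVector Λ v ∧ ‖y - x - v‖ < ‖y - x‖) ∧
    (∀ xk ∈ Λ, ∀ vk, (IsRelevantVector Λ vk ∨ vk = 0) →
      (∀ v, (IsRelevantVector Λ v ∨ v = 0) → ‖y - xk - vk‖ ≤ ‖y - xk - v‖) →
      (∀ x' ∈ Λ, ‖y - xk‖ ≤ ‖y - x'‖) ∨ ‖y - xk‖ > ‖y - (xk + vk)‖) := by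
  have hΛ_span : Λ = (span ℤ (range b)).toAddSubgroup := by
    rw [hΛ, setOf_exists_sum_intCast_smul_eq_span, coe_toAddSubgroup]
  have improve : ∀ x ∈ Λ, ¬(∀ x' ∈ Λ, ‖y - x‖ ≤ ‖y - x'‖) →
      ∃ v, IsRelevantVector Λ v ∧ ‖y - x - v‖ < ‖y - x‖ := by
    intro x hx hx_far
    push Not at hx_far
    obtain ⟨x', hx', hcloser⟩ := hx_far
    rw [hΛ_span] at hx hx' ⊢
    refine exists_isRelevantVector_norm_sub_lt (fun s hs => hb.setFinite_inter_span_int hs)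
      (sub_mem hx' hx) ?_
    rwa [sub_sub_sub_cancel_right]
  refine ⟨improve, fun xk hxk vk _ hvk_min => or_iff_not_imp_left.2 fun hxk_far => ?_⟩
  obtain ⟨v, hv, hv_lt⟩ := improve xk hxk hxk_far
  calc ‖y - (xk + vk)‖ = ‖y - xk - vk‖ := by rw [sub_add_eq_sub_sub]
    _ ≤ ‖y - xk - v‖ := hvk_min v (Or.inl hv)
    _ < ‖y - xk‖ := hv_lt
end

section
/- Let Λ be a lattice in ℝ^m and y ∈ ℝ^m. Let (x_k)_{k≥0} be any sequence of lattice points of Λ such that for every k, x_{k+1} = x_k + v_k where v_k is a minimizer of ‖y − x_k − v‖ over v ∈ R(Λ) ∪ {0}. Then there exists a finite K such that x_k is a closest lattice point to y for every k ≥ K. -/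
/-!
If some lattice point `z` satisfies `‖p - z‖ < ‖p‖`, then a shortest such `v` is relevant: a
lattice point `u` with `⟪u, u⟫ < ⟪v, u⟫` would split `v = u + (v - u)` into two strictly shorter
lattice vectors with `‖u‖² + ‖v - u‖² < ‖v‖²`, and since `‖w‖² < 2⟪p, w⟫` characterises the
improving `w`, one of the two pieces would still improve `p`. Hence, applied to `p = y - x_k`,
the step strictly decreases `‖y - x_k‖` until `x_k` is a closest point. The iterates stay in the
finite set of lattice points within `‖y - x_0‖` of `y`, so a strictly decreasing run cannot go on
forever, and the distance never increases afterwards.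
-/

open scoped RealInnerProductSpace

open Set Submodule Metric

theorem AddSubgroup.finite_isBounded_inter {G : Type*} [NormedAddCommGroup G] [ProperSpace G]
    (Λ : AddSubgroup G) [DiscreteTopology Λ] {K : Set G} (hK : Bornology.IsBounded K) :
    (K ∩ Λ).Finite :=
  finite_isBounded_inter_isClosed (isDiscrete_iff_discreteTopology.mpr ‹_›) hK
    Λ.isClosed_of_discrete

theorem AddSubgroup.exists_forall_norm_sub_le {G : Type*} [NormedAddCommGroup G] [ProperSpace G]
    (Λ : AddSubgroup G) [DiscreteTopology Λ] (y : G) :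
    ∃ z ∈ Λ, ∀ w ∈ Λ, ‖y - z‖ ≤ ‖y - w‖ := by
  obtain ⟨z, hz, hdist⟩ :=
    Λ.isClosed_of_discrete.exists_infDist_eq_dist ⟨0, Λ.zero_mem⟩ y
  refine ⟨z, hz, fun w hw => ?_⟩
  simpa only [← dist_eq_norm, ← hdist] using infDist_le_dist_of_mem hw

theorem LinearIndependent.discreteTopology_span_int {ι E : Type*} [NormedAddCommGroup E]
    [NormedSpace ℝ E] [FiniteDimensional ℝ E] {b : ι → E} (hb : LinearIndependent ℝ b) :
    DiscreteTopology (span ℤ (range b)) := by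
  have hbr : LinearIndepOn ℝ id (range b) := (linearIndepOn_id_range_iff hb.injective).mpr hb
  let B := Module.Basis.extend hbr
  have : Fintype (hbr.extend (subset_univ _)) := FiniteDimensional.fintypeBasisIndex B
  refine DiscreteTopology.of_subset (inferInstance : DiscreteTopology (span ℤ (range B)))
    (span_mono ?_)
  rw [Module.Basis.range_extend]
  exact hbr.subset_extend _

theorem setOf_exists_eq_sum_intCast_smul {ι E : Type*} [Fintype ι] [AddCommGroup E] [Module ℝ E]
    (b : ι → E) :
    {x | ∃ u : ι → ℤ, x = ∑ i, (u i : ℝ) • b i} = span ℤ (range b) := by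
  ext x
  simp [mem_span_range_iff_exists_fun, Int.cast_smul_eq_zsmul, eq_comm]

section RelevantVector

variable {E : Type*} [NormedAddCommGroup E] [InnerProductSpace ℝ E]

theorem norm_sub_lt_norm_iff_sq_lt_two_mul_inner {p w : E} :
    ‖p - w‖ < ‖p‖ ↔ ‖w‖ ^ 2 < 2 * ⟪p, w⟫ := by
  rw [← sq_lt_sq₀ (norm_nonneg _) (norm_nonneg _), norm_sub_sq_real]
  constructor <;> intro h <;> linarith

theorem sq_norm_add_sq_norm_sub_lt_of_inner_lt {u v : E} (h : ⟪u, u⟫ < ⟪v, u⟫) :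
    ‖u‖ ^ 2 + ‖v - u‖ ^ 2 < ‖v‖ ^ 2 := by
  rw [norm_sub_sq_real, ← real_inner_self_eq_norm_sq u, real_inner_comm]
  linarith

theorem norm_sub_lt_norm_or_norm_sub_sub_lt_norm {p u v : E} (hv : ‖p - v‖ < ‖p‖)
    (huv : ‖u‖ ^ 2 + ‖v - u‖ ^ 2 < ‖v‖ ^ 2) : ‖p - u‖ < ‖p‖ ∨ ‖p - (v - u)‖ < ‖p‖ := by
  simp only [norm_sub_lt_norm_iff_sq_lt_two_mul_inner, inner_sub_right] at *
  by_contra! h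
  linarith

theorem isRelevantVector_of_forall_norm_le_s4 (Λ : AddSubgroup E) {p v : E} (hvΛ : v ∈ Λ)
    (hv : ‖p - v‖ < ‖p‖) (hmin : ∀ w ∈ Λ, ‖p - w‖ < ‖p‖ → ‖v‖ ≤ ‖w‖) :
    IsRelevantVector Λ v := by
  refine ⟨hvΛ, ?_, fun u hu => ?_⟩
  · rintro rfl
    simp at hv
  by_contra! h
  have huv := sq_norm_add_sq_norm_sub_lt_of_inner_lt h
  rcases norm_sub_lt_norm_or_norm_sub_sub_lt_norm hv huv with hpu | hpvu
  · have := pow_le_pow_left₀ (norm_nonneg _) (hmin u hu hpu) 2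
    linarith [sq_nonneg ‖v - u‖]
  · have := pow_le_pow_left₀ (norm_nonneg _) (hmin (v - u) (Λ.sub_mem hvΛ hu) hpvu) 2
    linarith [sq_nonneg ‖u‖]

theorem exists_isRelevantVector_norm_sub_lt_s4 [ProperSpace E] (Λ : AddSubgroup E)
    [DiscreteTopology Λ] {p z : E} (hz : z ∈ Λ) (hzp : ‖p - z‖ < ‖p‖) :
    ∃ v, IsRelevantVector Λ v ∧ ‖p - v‖ < ‖p‖ := by
  have hball : ∀ w, w ∈ ball p ‖p‖ ↔ ‖p - w‖ < ‖p‖ := fun w => by rw [mem_ball', dist_eq_norm]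
  obtain ⟨v, ⟨hvp, hvΛ⟩, hmin⟩ := exists_min_image _ norm
    (Λ.finite_isBounded_inter isBounded_ball) ⟨z, (hball z).2 hzp, hz⟩
  refine ⟨v, isRelevantVector_of_forall_norm_le_s4 Λ hvΛ ((hball v).1 hvp) fun w hw hpw => ?_,
    (hball v).1 hvp⟩
  exact hmin w ⟨(hball w).2 hpw, hw⟩

end RelevantVector

section Descent

variable {E : Type*} [NormedAddCommGroup E] [InnerProductSpace ℝ E]

def IsRelevantDescentStep (Λ : Set E) (y a a' : E) : Prop :=
  ∃ v, (IsRelevantVector Λ v ∨ v = 0) ∧ a' = a + v ∧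
    ∀ w, (IsRelevantVector Λ w ∨ w = 0) → ‖y - a - v‖ ≤ ‖y - a - w‖

namespace IsRelevantDescentStep

variable {Λ : Set E} {y a a' : E}

theorem mem {Λ : AddSubgroup E} (h : IsRelevantDescentStep Λ y a a') (ha : a ∈ Λ) : a' ∈ Λ := by
  obtain ⟨v, hv | rfl, rfl, -⟩ := h
  · exact Λ.add_mem ha hv.1
  · simpa using ha

theorem norm_sub_le_norm_sub_sub (h : IsRelevantDescentStep Λ y a a') {w : E}
    (hw : IsRelevantVector Λ w ∨ w = 0) : ‖y - a'‖ ≤ ‖y - a - w‖ := by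
  obtain ⟨v, -, rfl, hmin⟩ := h
  simpa only [sub_sub] using hmin w hw

theorem norm_sub_le (h : IsRelevantDescentStep Λ y a a') : ‖y - a'‖ ≤ ‖y - a‖ := by
  simpa using h.norm_sub_le_norm_sub_sub (Or.inr rfl)

theorem norm_sub_lt [ProperSpace E] {Λ : AddSubgroup E} [DiscreteTopology Λ]
    (h : IsRelevantDescentStep Λ y a a') (ha : a ∈ Λ) {z : E} (hz : z ∈ Λ)
    (hzy : ‖y - z‖ < ‖y - a‖) : ‖y - a'‖ < ‖y - a‖ := by
  obtain ⟨v, hv, hvy⟩ := exists_isRelevantVector_norm_sub_lt_s4 Λ (Λ.sub_mem hz ha)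
    (p := y - a) (by rwa [sub_sub_sub_cancel_right])
  exact (h.norm_sub_le_norm_sub_sub (Or.inl hv)).trans_lt hvy

end IsRelevantDescentStep

theorem exists_forall_ge_forall_norm_sub_le_of_isRelevantDescentStep [ProperSpace E]
    (Λ : AddSubgroup E) [DiscreteTopology Λ] {y : E} {x : ℕ → E} (hx0 : x 0 ∈ Λ)
    (hx : ∀ k, IsRelevantDescentStep Λ y (x k) (x (k + 1))) :
    ∃ K, ∀ k ≥ K, x k ∈ Λ ∧ ∀ x' ∈ Λ, ‖y - x k‖ ≤ ‖y - x'‖ := by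
  have hmem : ∀ k, x k ∈ Λ := fun k => Nat.rec hx0 (fun k hk => (hx k).mem hk) k
  have hanti : Antitone fun k => ‖y - x k‖ := antitone_nat_of_succ_le fun k => (hx k).norm_sub_le
  obtain ⟨z, hzΛ, hz⟩ := Λ.exists_forall_norm_sub_le y
  have hreach : ∃ K, ‖y - x K‖ ≤ ‖y - z‖ := by
    by_contra! hfar
    have hstrict : StrictAnti fun k => ‖y - x k‖ :=
      strictAnti_nat_of_succ_lt fun k => (hx k).norm_sub_lt (hmem k) hzΛ (hfar k)
    have hrange : range x ⊆ closedBall y ‖y - x 0‖ ∩ Λ := by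
      rintro _ ⟨k, rfl⟩
      exact ⟨by simpa [dist_eq_norm, norm_sub_rev] using hanti k.zero_le, hmem k⟩
    exact infinite_range_of_injective (hstrict.injective.of_comp (f := fun a => ‖y - a‖))
      ((Λ.finite_isBounded_inter isBounded_closedBall).subset hrange)
  obtain ⟨K, hK⟩ := hreach
  exact ⟨K, fun k hk => ⟨hmem k, fun x' hx' => ((hanti hk).trans hK).trans (hz x' hx')⟩⟩

end Descent

/-- Any sequence of lattice points with `x_{k+1} = x_k + v_k`, where `v_k`
minimizes `‖y − x_k − v‖` over `v ∈ R(Λ) ∪ {0}`, reaches a closest lattice point to `y`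
after finitely many steps and stays at closest lattice points thereafter. -/
theorem iteration_reaches_closest_point
    (n m : ℕ) (b : Fin n → EuclideanSpace ℝ (Fin m))
    (hb : LinearIndependent ℝ b)
    (Λ : Set (EuclideanSpace ℝ (Fin m)))
    (hΛ : Λ = {x | ∃ u : Fin n → ℤ, x = ∑ i, (u i : ℝ) • b i})
    (y : EuclideanSpace ℝ (Fin m))
    (x : ℕ → EuclideanSpace ℝ (Fin m))
    (hx0 : x 0 ∈ Λ)
    (hstep : ∀ k, ∃ v, (IsRelevantVector Λ v ∨ v = 0) ∧ x (k + 1) = x k + v ∧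
      ∀ w, (IsRelevantVector Λ w ∨ w = 0) → ‖y - x k - v‖ ≤ ‖y - x k - w‖) :
    ∃ K : ℕ, ∀ k ≥ K, x k ∈ Λ ∧ ∀ x' ∈ Λ, ‖y - x k‖ ≤ ‖y - x'‖ := by
  have : DiscreteTopology (span ℤ (range b)).toAddSubgroup := hb.discreteTopology_span_int
  rw [setOf_exists_eq_sum_intCast_smul] at hΛ
  subst hΛ
  exact exists_forall_ge_forall_norm_sub_le_of_isRelevantDescentStep
    (span ℤ (range b)).toAddSubgroup hx0 hstep
end

section
/- Let b_1, …, b_{n+1} ∈ ℝ^m satisfy b_1 + ⋯ + b_{n+1} = 0, let B denote the linear map sending p ∈ ℝ^{n+1} to ∑_{i=1}^{n+1} p_i b_i, and let q_{ij} = ⟨b_i, b_j⟩. Then for every p ∈ ℝ^{n+1} and every subset S of {1, …, n+1}: ‖Bp‖² − ‖B(p + 1_S)‖² = Φ(S, p), where Φ(S, p) = ∑_{i ∈ S} ∑_{j ∉ S} q_{ij}(1 + 2p_i − 2p_j). -/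
/-!
With `v = Bp` and `u = ∑_{i ∈ S} b_i` we have `B(p + 1_S) = v + u`, so the left side is
`-⟪u, 2v + u⟫ = -⟪u, ∑ c_i b_i⟫` for the weights `c = 2p + 1_S`. Since `∑ b_i = 0`, also
`-u = ∑_{j ∉ S} b_j`, and expanding the inner product over `S × Sᶜ` gives
`∑_{i ∈ S} ∑_{j ∉ S} q_{ij} (c_i - c_j)`, where `c_i - c_j = 1 + 2p_i - 2p_j`.
-/

open scoped RealInnerProductSpace

open Finset

theorem Finset.sum_compl_eq_neg_of_sum_eq_zero {ι M : Type*} [Fintype ι] [DecidableEq ι]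
    [AddCommGroup M] {b : ι → M} (hb : ∑ i, b i = 0) (S : Finset ι) :
    ∑ j ∈ Sᶜ, b j = -∑ i ∈ S, b i :=
  eq_neg_of_add_eq_zero_right <| (sum_add_sum_compl S b).trans hb

section CutIdentity

variable {ι E : Type*} [NormedAddCommGroup E] [InnerProductSpace ℝ E]

theorem inner_sum_sum (s t : Finset ι) (f g : ι → E) :
    ⟪∑ i ∈ s, f i, ∑ j ∈ t, g j⟫ = ∑ i ∈ s, ∑ j ∈ t, ⟪f i, g j⟫ := by
  simp only [sum_inner, inner_sum]
  exact sum_comm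

theorem sum_sum_compl_inner_mul_sub [Fintype ι] [DecidableEq ι] {b : ι → E}
    (hb : ∑ i, b i = 0) (S : Finset ι) (c : ι → ℝ) :
    ∑ i ∈ S, ∑ j ∈ Sᶜ, ⟪b i, b j⟫ * (c i - c j) = -⟪∑ i ∈ S, b i, ∑ i, c i • b i⟫ := by
  have hleft : ∑ i ∈ S, ∑ j ∈ Sᶜ, ⟪b i, b j⟫ * c i = -⟪∑ i ∈ S, b i, ∑ i ∈ S, c i • b i⟫ := by
    rw [real_inner_comm, ← inner_neg_right, ← sum_compl_eq_neg_of_sum_eq_zero hb,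
      inner_sum_sum]
    simp only [real_inner_smul_left, mul_comm]
  have hright : ∑ i ∈ S, ∑ j ∈ Sᶜ, ⟪b i, b j⟫ * c j = ⟪∑ i ∈ S, b i, ∑ j ∈ Sᶜ, c j • b j⟫ := by
    simp only [inner_sum_sum, real_inner_smul_right, mul_comm]
  simp only [mul_sub, sum_sub_distrib, hleft, hright, ← sum_add_sum_compl S (fun i ↦ c i • b i),
    inner_add_right]
  ring

end CutIdentity

/-- Lemma, part 1: if `b_1 + ⋯ + b_{n+1} = 0` then
`‖Bp‖² − ‖B(p + 1_S)‖² = Φ(S, p) = ∑_{i ∈ S} ∑_{j ∉ S} q_{ij}(1 + 2p_i − 2p_j)`. -/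
theorem norm_sq_diff_add_indicator
    (n m : ℕ) (b : Fin (n + 1) → EuclideanSpace ℝ (Fin m))
    (hsum : ∑ i, b i = 0)
    (p : Fin (n + 1) → ℝ) (S : Finset (Fin (n + 1))) :
    ‖∑ i, p i • b i‖ ^ 2 -
        ‖∑ i, (p i + if i ∈ S then (1 : ℝ) else 0) • b i‖ ^ 2 =
      ∑ i ∈ S, ∑ j ∈ Sᶜ, ⟪b i, b j⟫ * (1 + 2 * p i - 2 * p j) := by
  set v := ∑ i, p i • b i
  set u := ∑ i ∈ S, b i
  have hindicator : ∑ i, (if i ∈ S then (1 : ℝ) else 0) • b i = u := by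
    simp only [ite_smul, one_smul, zero_smul, sum_ite_mem, univ_inter, u]
  have hshift : ∑ i, (p i + if i ∈ S then (1 : ℝ) else 0) • b i = v + u := by
    simp only [add_smul, sum_add_distrib, hindicator, v]
  have hweights : ∑ i, (2 * p i + if i ∈ S then (1 : ℝ) else 0) • b i = (2 : ℝ) • v + u := by
    simp only [add_smul, sum_add_distrib, hindicator, mul_smul, ← smul_sum, v]
  have hcut := sum_sum_compl_inner_mul_sub hsum S fun i ↦ 2 * p i + if i ∈ S then 1 else 0
  rw [hweights] at hcut
  have hphi : ∑ i ∈ S, ∑ j ∈ Sᶜ, ⟪b i, b j⟫ * (1 + 2 * p i - 2 * p j) =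
      -⟪u, (2 : ℝ) • v + u⟫ := by
    rw [← hcut]
    refine sum_congr rfl fun i hi ↦ sum_congr rfl fun j hj ↦ ?_
    rw [mem_compl] at hj
    simp only [hi, hj, if_true, if_false]
    ring
  rw [hshift, hphi, norm_add_sq_real, inner_add_right, real_inner_smul_right, real_inner_comm,
    real_inner_self_eq_norm_sq]
  ring
end

section
/- Let b_1, …, b_{n+1} ∈ ℝ^m satisfy b_1 + ⋯ + b_{n+1} = 0, let B denote the linear map sending p ∈ ℝ^{n+1} to ∑_{i=1}^{n+1} p_i b_i, and let q_{ij} = ⟨b_i, b_j⟩. Then for every p ∈ ℝ^{n+1} and every subset S of {1, …, n+1}: ‖Bp‖² − ‖B(p − 1_S)‖² = Φ(S̄, p), where S̄ is the complement of S in {1, …, n+1} and Φ(T, p) = ∑_{i ∈ T} ∑_{j ∉ T} q_{ij}(1 + 2p_i − 2p_j). -/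
/-! With `s = ∑_{i ∈ S} b_i` we have `B(p - 1_S) = Bp - s`, so the left side is `2⟪Bp, s⟫ - ‖s‖²`.
Expanding `Φ(S̄, p)` bilinearly and using `∑_{i ∉ S} b_i = -s` (from `∑ b_i = 0`) gives the same. -/

open scoped RealInnerProductSpace
open Finset

theorem sum_sum_inner_mul_one_add_two_mul_sub {ι E : Type*} [NormedAddCommGroup E]
    [InnerProductSpace ℝ E] (b : ι → E) (p : ι → ℝ) (T U : Finset ι) :
    ∑ i ∈ T, ∑ j ∈ U, ⟪b i, b j⟫ * (1 + 2 * p i - 2 * p j) =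
      ⟪∑ i ∈ T, b i, ∑ j ∈ U, b j⟫ + 2 * ⟪∑ i ∈ T, p i • b i, ∑ j ∈ U, b j⟫ -
        2 * ⟪∑ i ∈ T, b i, ∑ j ∈ U, p j • b j⟫ := by
  simp only [sum_inner, real_inner_smul_left, mul_sum, ← sum_add_distrib, ← sum_sub_distrib]
  simp only [inner_sum, real_inner_smul_right, mul_sum, ← sum_add_distrib, ← sum_sub_distrib]
  exact sum_congr rfl fun i _ => sum_congr rfl fun j _ => by ring

/-- Lemma, part 2: if `b_1 + ⋯ + b_{n+1} = 0` then
`‖Bp‖² − ‖B(p − 1_S)‖² = Φ(S̄, p)` where `S̄` is the complement of `S`. -/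
theorem norm_sq_diff_sub_indicator
    (n m : ℕ) (b : Fin (n + 1) → EuclideanSpace ℝ (Fin m))
    (hsum : ∑ i, b i = 0)
    (p : Fin (n + 1) → ℝ) (S : Finset (Fin (n + 1))) :
    ‖∑ i, p i • b i‖ ^ 2 -
        ‖∑ i, (p i - if i ∈ S then (1 : ℝ) else 0) • b i‖ ^ 2 =
      ∑ i ∈ Sᶜ, ∑ j ∈ Sᶜᶜ, ⟪b i, b j⟫ * (1 + 2 * p i - 2 * p j) := by
  have hcompl : ∑ i ∈ Sᶜ, b i = -∑ i ∈ S, b i :=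
    eq_neg_of_add_eq_zero_right (by rw [sum_add_sum_compl, hsum])
  have hshift : ∑ i, (p i - if i ∈ S then (1 : ℝ) else 0) • b i =
      ∑ i, p i • b i - ∑ i ∈ S, b i := by
    simp only [sub_smul, sum_sub_distrib, ite_smul, one_smul, zero_smul, sum_ite_mem, univ_inter]
  rw [hshift, norm_sub_sq_real, compl_compl, sum_sum_inner_mul_one_add_two_mul_sub, hcompl,
    ← sum_add_sum_compl S fun i => p i • b i]
  simp only [inner_neg_left, real_inner_comm (∑ i ∈ S, b i), inner_add_right, inner_neg_right,
    real_inner_self_eq_norm_sq]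
  ring
end

section
/- Let p ∈ ℝ^{n+1} and suppose S is a nonempty subset of {1, …, n+1} with min{p_i : i ∈ S} − max{p_j : j ∉ S} ≥ 2 that is maximal with this property (so S contains every index i with p_i = max(p)). Then rng(p − 1_S) = rng(p) − 1. -/
/-! Lowering the top block `S` by one lowers the maximum by one, since the maximum is attained
in `S` and every value outside `S` is at least two below it. The minimum is attained outside `S`,
and every value in `S` lies at least two above it, so the minimum does not move. -/

namespace Finset

variable {ι α : Type*} [DecidableEq ι] [AddCommGroup α] [LinearOrder α] [IsOrderedAddMonoid α]
  {s : Finset ι} (hs : s.Nonempty) {f : ι → α} {S : Finset ι} {c : α}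

theorem sup'_sub_ite_mem_eq {i₀ : ι} (hi₀s : i₀ ∈ s) (hi₀S : i₀ ∈ S) (hmax : s.sup' hs f = f i₀)
    (hgap : ∀ j ∈ s, j ∉ S → f j + c ≤ f i₀) :
    s.sup' hs (fun i => f i - if i ∈ S then c else 0) = s.sup' hs f - c := by
  refine le_antisymm (sup'_le _ _ fun i hi => ?_) (le_sup'_of_le _ hi₀s (by simp [hi₀S, hmax]))
  by_cases hiS : i ∈ S
  · simpa only [hiS, ↓reduceIte, sub_le_sub_iff_right] using le_sup' f hi
  · simpa [hiS, hmax, le_sub_iff_add_le] using hgap i hi hiS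

theorem inf'_sub_ite_mem_eq {j₀ : ι} (hj₀s : j₀ ∈ s) (hj₀S : j₀ ∉ S) (hmin : s.inf' hs f = f j₀)
    (hgap : ∀ i ∈ s, i ∈ S → f j₀ + c ≤ f i) :
    s.inf' hs (fun i => f i - if i ∈ S then c else 0) = s.inf' hs f := by
  refine le_antisymm (inf'_le_of_le _ hj₀s (by simp [hj₀S, hmin])) (le_inf' _ _ fun i hi => ?_)
  by_cases hiS : i ∈ S
  · simpa [hiS, hmin, le_sub_iff_add_le] using hgap i hi hiS
  · simpa only [hiS, ↓reduceIte, sub_zero] using inf'_le f hi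

end Finset

theorem rng_decrng_eq_rng_sub_one_general
    (n : ℕ) (p : Fin (n + 1) → ℝ) (S : Finset (Fin (n + 1)))
    (hproper : S ≠ Finset.univ)
    (hgap : ∀ i ∈ S, ∀ j ∉ S, p j + 2 ≤ p i)
    (hargmax : ∀ i, p i = Finset.univ.sup' Finset.univ_nonempty p → i ∈ S) :
    Finset.univ.sup' Finset.univ_nonempty (fun i => p i - if i ∈ S then 1 else 0) -
        Finset.univ.inf' Finset.univ_nonempty (fun i => p i - if i ∈ S then 1 else 0) =
      (Finset.univ.sup' Finset.univ_nonempty p -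
        Finset.univ.inf' Finset.univ_nonempty p) - 1 := by
  obtain ⟨i₀, -, hi₀⟩ := Finset.exists_mem_eq_sup' Finset.univ_nonempty p
  obtain ⟨j₀, -, hj₀⟩ := Finset.exists_mem_eq_inf' Finset.univ_nonempty p
  obtain ⟨j₁, hj₁⟩ : ∃ j, j ∉ S := by simpa [Finset.eq_univ_iff_forall] using hproper
  have hi₀S : i₀ ∈ S := hargmax i₀ hi₀.symm
  have hj₀_le : p j₀ ≤ p j₁ := hj₀ ▸ Finset.inf'_le p (Finset.mem_univ j₁)
  have hj₀S : j₀ ∉ S := fun hj₀S => by linarith [hgap j₀ hj₀S j₁ hj₁]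
  rw [Finset.sup'_sub_ite_mem_eq _ (Finset.mem_univ i₀) hi₀S hi₀
      fun j _ hj => by linarith [hgap i₀ hi₀S j hj],
    Finset.inf'_sub_ite_mem_eq _ (Finset.mem_univ j₀) hj₀S hj₀
      fun i _ hi => by linarith [hgap i hi j₁ hj₁]]
  ring

/-- if `S` is a nonempty (proper) subset of the indices with
`min{p_i : i ∈ S} − max{p_j : j ∉ S} ≥ 2` that is inclusion-maximal with this property
(so `S` contains every index attaining `max(p)`), then `rng(p − 1_S) = rng(p) − 1`. -/
theorem rng_decrng_eq_rng_sub_one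
    (n : ℕ) (p : Fin (n + 1) → ℝ) (S : Finset (Fin (n + 1)))
    (hne : S.Nonempty) (hproper : S ≠ Finset.univ)
    (hgap : ∀ i ∈ S, ∀ j ∉ S, p j + 2 ≤ p i)
    (hmaximal : ∀ T : Finset (Fin (n + 1)), T ≠ Finset.univ →
      (∀ i ∈ T, ∀ j ∉ T, p j + 2 ≤ p i) → T ⊆ S)
    (hargmax : ∀ i, p i = Finset.univ.sup' Finset.univ_nonempty p → i ∈ S) :
    Finset.univ.sup' Finset.univ_nonempty (fun i => p i - if i ∈ S then 1 else 0) -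
        Finset.univ.inf' Finset.univ_nonempty (fun i => p i - if i ∈ S then 1 else 0) =
      (Finset.univ.sup' Finset.univ_nonempty p -
        Finset.univ.inf' Finset.univ_nonempty p) - 1 :=
  rng_decrng_eq_rng_sub_one_general n p S hproper hgap hargmax
end

section
/- Let p ∈ ℝ^{n+1} and define the sequence d_0, d_1, d_2, … by d_0 = p and d_{k+1} = decrng(d_k). Then there exists a finite integer T such that d_k = d_T for all k ≥ T. -/
open scoped Classical

/-- `subr p` is the largest (inclusion-maximal) proper subset `S` of the indices with
`min{p_i : i ∈ S} − max{p_j : j ∉ S} ≥ 2` (equivalently `∀ i ∈ S, ∀ j ∉ S, p j + 2 ≤ p i`),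
or `∅` if no such nonempty subset exists.  (All subsets with this property are totally
ordered by inclusion, so their union — computed here as a `Finset.sup` — is the largest.) -/
noncomputable def subr {n : ℕ} (p : Fin (n + 1) → ℝ) : Finset (Fin (n + 1)) :=
  Finset.sup
    ((Finset.univ : Finset (Finset (Fin (n + 1)))).filter
      (fun T => T ≠ Finset.univ ∧ ∀ i ∈ T, ∀ j ∉ T, p j + 2 ≤ p i)) id

/-- `decrng p = p − 1_{subr p}` decrements the entries of `p` indexed by `subr p`. -/
noncomputable def decrng {n : ℕ} (p : Fin (n + 1) → ℝ) : Fin (n + 1) → ℝ :=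
  fun i => p i - if i ∈ subr p then 1 else 0

/-!
Every proper index set separated from its complement by a gap of at least `2` is comparable
with every other one, so these sets form a chain containing `∅`, and `subr p` is one of them.
Hence some entry outside `subr p` survives, and the decremented entries, lying at least `2`
above it, never drop below the minimum: the minimum of the vector never decreases. While
`decrng` moves the vector, the sum of the entries drops by `#(subr p) ≥ 1`, which can happen
only finitely often.
-/

theorem exists_forall_ge_eq_of_potential {α : Type*} {f : α → α} {d : ℕ → α}
    (hd : ∀ k, d (k + 1) = f (d k)) (Φ : α → ℝ) {m : ℝ} (hm : ∀ k, m ≤ Φ (d k))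
    (hΦ : ∀ k, f (d k) ≠ d k → Φ (f (d k)) + 1 ≤ Φ (d k)) :
    ∃ T, ∀ k ≥ T, d k = d T := by
  obtain ⟨T, hT⟩ : ∃ T, f (d T) = d T := by
    by_contra! hmove
    have hdrop : ∀ k : ℕ, Φ (d k) ≤ Φ (d 0) - k := by
      intro k
      induction k with
      | zero => simp
      | succ k ih =>
        have := hΦ k (hmove k)
        rw [hd]
        push_cast
        linarith
    obtain ⟨N, hN⟩ := exists_nat_gt (Φ (d 0) - m)
    linarith [hdrop N, hm N]
  refine ⟨T, fun k hk => ?_⟩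
  induction k, hk using Nat.le_induction with
  | base => rfl
  | succ k _ ih => rw [hd, ih, hT]

section Decrng

variable {n : ℕ} (p : Fin (n + 1) → ℝ)

noncomputable def gapSets : Finset (Finset (Fin (n + 1))) :=
  Finset.univ.filter (fun T => T ≠ Finset.univ ∧ ∀ i ∈ T, ∀ j ∉ T, p j + 2 ≤ p i)

theorem subr_eq_sup_gapSets : subr p = (gapSets p).sup id := rfl

theorem mem_gapSets {T : Finset (Fin (n + 1))} :
    T ∈ gapSets p ↔ T ≠ Finset.univ ∧ ∀ i ∈ T, ∀ j ∉ T, p j + 2 ≤ p i := by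
  simp [gapSets]

theorem empty_mem_gapSets : ∅ ∈ gapSets p := by
  simp [mem_gapSets, Finset.univ_nonempty.ne_empty.symm]

theorem subset_or_subset_of_mem_gapSets {A B : Finset (Fin (n + 1))}
    (hA : A ∈ gapSets p) (hB : B ∈ gapSets p) : A ⊆ B ∨ B ⊆ A := by
  rw [mem_gapSets] at hA hB
  by_contra! h
  obtain ⟨i, hiA, hiB⟩ := Finset.not_subset.mp h.1
  obtain ⟨j, hjB, hjA⟩ := Finset.not_subset.mp h.2
  linarith [hA.2 i hiA j hjA, hB.2 j hjB i hiB]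

theorem supClosed_gapSets : SupClosed (gapSets p : Set (Finset (Fin (n + 1)))) := by
  intro A hA B hB
  rcases subset_or_subset_of_mem_gapSets p hA hB with h | h
  · rwa [Finset.sup_eq_union, Finset.union_eq_right.mpr h]
  · rwa [Finset.sup_eq_union, Finset.union_eq_left.mpr h]

theorem subr_mem_gapSets : subr p ∈ gapSets p := by
  rw [subr_eq_sup_gapSets]
  exact (supClosed_gapSets p).finsetSup_mem ⟨_, empty_mem_gapSets p⟩ fun _ h => h

theorem exists_notMem_subr : ∃ j, j ∉ subr p := by
  by_contra! hall
  exact ((mem_gapSets p).mp (subr_mem_gapSets p)).1 (Finset.eq_univ_of_forall hall)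

theorem add_two_le_of_mem_subr {i j : Fin (n + 1)} (hi : i ∈ subr p) (hj : j ∉ subr p) :
    p j + 2 ≤ p i :=
  ((mem_gapSets p).mp (subr_mem_gapSets p)).2 i hi j hj

theorem le_decrng_of_forall_le {m : ℝ} (hm : ∀ i, m ≤ p i) (i : Fin (n + 1)) :
    m ≤ decrng p i := by
  by_cases hi : i ∈ subr p
  · obtain ⟨j, hj⟩ := exists_notMem_subr p
    simp only [decrng, hi, if_true]
    linarith [add_two_le_of_mem_subr p hi hj, hm j]
  · simpa [decrng, hi] using hm i

theorem sum_decrng : ∑ i, decrng p i = ∑ i, p i - (subr p).card := by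
  simp [decrng, Finset.sum_sub_distrib, Finset.sum_ite_mem]

theorem decrng_eq_self_of_subr_eq_empty (h : subr p = ∅) : decrng p = p := by
  funext i
  simp [decrng, h]

theorem sum_decrng_add_one_le (h : decrng p ≠ p) : ∑ i, decrng p i + 1 ≤ ∑ i, p i := by
  have hne : (subr p).Nonempty :=
    Finset.nonempty_iff_ne_empty.mpr fun h' => h (decrng_eq_self_of_subr_eq_empty p h')
  have : (1 : ℝ) ≤ (subr p).card := by exact_mod_cast hne.card_pos
  rw [sum_decrng]
  linarith

end Decrng

theorem decrng_iteration_stabilizes_general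
    (n : ℕ) (d : ℕ → Fin (n + 1) → ℝ)
    (hd : ∀ k, d (k + 1) = decrng (d k)) :
    ∃ T : ℕ, ∀ k ≥ T, d k = d T := by
  set m := Finset.univ.inf' Finset.univ_nonempty (d 0)
  have hlow : ∀ k i, m ≤ d k i := by
    intro k
    induction k with
    | zero => exact fun i => Finset.inf'_le _ (Finset.mem_univ i)
    | succ k ih => exact fun i => hd k ▸ le_decrng_of_forall_le (d k) ih i
  refine exists_forall_ge_eq_of_potential hd (fun q => ∑ i, q i) (m := ∑ _i : Fin (n + 1), m)
    (fun k => Finset.sum_le_sum fun i _ => hlow k i) fun k => sum_decrng_add_one_le (d k)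

/-- the sequence `d_0 = p`, `d_{k+1} = decrng(d_k)` is eventually constant. -/
theorem decrng_iteration_stabilizes
    (n : ℕ) (p : Fin (n + 1) → ℝ) (d : ℕ → Fin (n + 1) → ℝ)
    (hd0 : d 0 = p) (hd : ∀ k, d (k + 1) = decrng (d k)) :
    ∃ T : ℕ, ∀ k ≥ T, d k = d T :=
  decrng_iteration_stabilizes_general n d hd
end

section
/- Let Λ be an n-dimensional lattice of Voronoi's first kind in ℝ^m with obtuse superbasis b_1, …, b_{n+1}, let B be the linear map sending w ∈ ℝ^{n+1} to ∑_{i=1}^{n+1} w_i b_i, and let z ∈ ℝ^{n+1}. If v ∈ ℤ^{n+1} is such that B(⌊z⌋ + v) is a closest lattice point of Λ to y = Bz, then B(⌊z⌋ + decrng(v)) is also a closest lattice point of Λ to y. Here ⌊z⌋ denotes the componentwise floor of z. -/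
/-!
Write `t = fract z - v` and `s = 1_{subr v}`: the old and new residuals `y - x` are `Bt` and `Bt + Bs`,
so it suffices that `⟪B(2t + s), Bs⟫ ≤ 0`. Since the superbasis sums to zero,
`2⟪Bg, Bh⟫ = -∑ᵢ ∑ⱼ qᵢⱼ (gᵢ - gⱼ)(hᵢ - hⱼ)`, which is `≤ 0` for an obtuse superbasis as soon as `g`
antivaries with `h`. For `i ∈ subr v` and `j ∉ subr v` we have `vᵢ ≥ vⱼ + 2` while fractional parts
differ by less than `1`, so `2t + s` is smaller on `subr v` than off it. The new point has integer
coefficients, and lies in `Λ` because `b_{n+1} = -(b_1 + ⋯ + b_n)`.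
-/

open scoped RealInnerProductSpace Classical

open Finset

theorem add_two_le_of_mem_subr_of_notMem {n : ℕ} {p : Fin (n + 1) → ℝ} {i j : Fin (n + 1)}
    (hi : i ∈ subr p) (hj : j ∉ subr p) : p j + 2 ≤ p i := by
  obtain ⟨T, hT, hiT⟩ := mem_sup.mp hi
  have hjT : j ∉ T := fun hjT => hj (mem_sup.mpr ⟨T, hT, hjT⟩)
  exact (mem_filter.mp hT).2.2 i hiT j hjT

theorem antivary_two_mul_sub_add_indicator_subr {n : ℕ} (v r : Fin (n + 1) → ℝ)
    (hr₀ : ∀ i, 0 ≤ r i) (hr₁ : ∀ i, r i < 1) :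
    Antivary (fun i => 2 * (r i - v i) + if i ∈ subr v then 1 else 0)
      (fun i => if i ∈ subr v then (1 : ℝ) else 0) := by
  intro i j hij
  obtain ⟨hi, hj⟩ : i ∉ subr v ∧ j ∈ subr v := by
    dsimp only at hij
    split_ifs at hij <;> norm_num at hij
    tauto
  simp only [hi, hj, if_true, if_false]
  linarith [add_two_le_of_mem_subr_of_notMem hj hi, hr₀ i, hr₁ j]

theorem exists_sum_castSucc_eq_sum_of_sum_eq_zero {n : ℕ} {M : Type*} [AddCommGroup M]
    [Module ℝ M] {b : Fin (n + 1) → M} (hb : ∑ i, b i = 0) (c : Fin (n + 1) → ℤ) :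
    ∃ u : Fin n → ℤ, ∑ i, (c i : ℝ) • b i = ∑ i, (u i : ℝ) • b i.castSucc := by
  have hlast : b (Fin.last n) = -∑ i : Fin n, b i.castSucc := by
    rw [Fin.sum_univ_castSucc] at hb
    exact eq_neg_of_add_eq_zero_right hb
  refine ⟨fun i => c i.castSucc - c (Fin.last n), ?_⟩
  simp only [Fin.sum_univ_castSucc (f := fun i => (c i : ℝ) • b i), hlast, smul_neg, smul_sum,
    ← sub_eq_add_neg, ← sum_sub_distrib, ← sub_smul, Int.cast_sub]

section GramSums

variable {ι E : Type*} [Fintype ι] [NormedAddCommGroup E] [InnerProductSpace ℝ E]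

theorem inner_sum_smul_sum_smul (b : ι → E) (g h : ι → ℝ) :
    ⟪∑ i, g i • b i, ∑ j, h j • b j⟫ = ∑ i, ∑ j, g i * h j * ⟪b i, b j⟫ := by
  simp_rw [sum_inner, inner_sum, real_inner_smul_left, real_inner_smul_right, ← mul_assoc]

theorem two_mul_inner_sum_smul_of_sum_eq_zero {b : ι → E} (hb : ∑ i, b i = 0) (g h : ι → ℝ) :
    2 * ⟪∑ i, g i • b i, ∑ j, h j • b j⟫ =
      -∑ i, ∑ j, ⟪b i, b j⟫ * ((g i - g j) * (h i - h j)) := by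
  have hrow (i : ι) : ∑ j, ⟪b i, b j⟫ = 0 := by rw [← inner_sum, hb, inner_zero_right]
  have hcol (j : ι) : ∑ i, ⟪b i, b j⟫ = 0 := by rw [← sum_inner, hb, inner_zero_left]
  have hdiag : ∑ i, ∑ j, g i * h i * ⟪b i, b j⟫ = 0 := by
    simp only [← mul_sum, hrow, mul_zero, sum_const_zero]
  have hdiag' : ∑ i, ∑ j, g j * h j * ⟪b i, b j⟫ = 0 := by
    rw [sum_comm]; simp only [← mul_sum, hcol, mul_zero, sum_const_zero]
  have hswap : ∑ i, ∑ j, g j * h i * ⟪b i, b j⟫ = ∑ i, ∑ j, g i * h j * ⟪b i, b j⟫ := by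
    rw [sum_comm]
    exact sum_congr rfl fun i _ => sum_congr rfl fun j _ => by rw [real_inner_comm]
  have hexpand (i j : ι) : ⟪b i, b j⟫ * ((g i - g j) * (h i - h j)) =
      g i * h i * ⟪b i, b j⟫ + g j * h j * ⟪b i, b j⟫ - g i * h j * ⟪b i, b j⟫
        - g j * h i * ⟪b i, b j⟫ := by ring
  simp only [hexpand, sum_add_distrib, sum_sub_distrib, hdiag, hdiag', hswap,
    inner_sum_smul_sum_smul]
  ring

theorem inner_sum_smul_nonpos_of_antivary {b : ι → E} (hb : ∑ i, b i = 0)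
    (hobtuse : ∀ i j, i ≠ j → ⟪b i, b j⟫ ≤ 0) {g h : ι → ℝ} (hgh : Antivary g h) :
    ⟪∑ i, g i • b i, ∑ j, h j • b j⟫ ≤ 0 := by
  have hterm (i j : ι) : 0 ≤ ⟪b i, b j⟫ * ((g i - g j) * (h i - h j)) := by
    obtain rfl | hij := eq_or_ne i j
    · simp
    · exact mul_nonneg_of_nonpos_of_nonpos (hobtuse i j hij) (hgh.sub_mul_sub_nonpos j i)
  have := sum_nonneg fun i (_ : i ∈ univ) => sum_nonneg fun j (_ : j ∈ univ) => hterm i j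
  linarith [two_mul_inner_sum_smul_of_sum_eq_zero hb g h]

theorem norm_add_le_norm_of_inner_two_smul_add_nonpos {a c : E}
    (h : ⟪(2 : ℝ) • a + c, c⟫ ≤ 0) : ‖a + c‖ ≤ ‖a‖ := by
  rw [inner_add_left, real_inner_smul_left, real_inner_self_eq_norm_sq] at h
  rw [← sq_le_sq₀ (norm_nonneg _) (norm_nonneg _), norm_add_sq_real]
  linarith

end GramSums

theorem decrng_preserves_closest_point_general
    (n m : ℕ) (b : Fin (n + 1) → EuclideanSpace ℝ (Fin m))
    (Λ : Set (EuclideanSpace ℝ (Fin m)))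
    (hΛ : Λ = {x | ∃ u : Fin n → ℤ, x = ∑ i, (u i : ℝ) • b i.castSucc})
    (hsum : ∑ i, b i = 0)
    (hobtuse : ∀ i j, i ≠ j → ⟪b i, b j⟫ ≤ 0)
    (z : Fin (n + 1) → ℝ) (v : Fin (n + 1) → ℤ)
    (hclosest : (∑ i, ((⌊z i⌋ : ℝ) + (v i : ℝ)) • b i) ∈ Λ ∧
      ∀ x' ∈ Λ, ‖(∑ i, z i • b i) - ∑ i, ((⌊z i⌋ : ℝ) + (v i : ℝ)) • b i‖ ≤
        ‖(∑ i, z i • b i) - x'‖) :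
    (∑ i, ((⌊z i⌋ : ℝ) + decrng (fun j => (v j : ℝ)) i) • b i) ∈ Λ ∧
      ∀ x' ∈ Λ, ‖(∑ i, z i • b i) - ∑ i, ((⌊z i⌋ : ℝ) + decrng (fun j => (v j : ℝ)) i) • b i‖ ≤
        ‖(∑ i, z i • b i) - x'‖ := by
  set S := subr (fun j => (v j : ℝ))
  set s : Fin (n + 1) → ℝ := fun i => if i ∈ S then 1 else 0
  set t : Fin (n + 1) → ℝ := fun i => Int.fract (z i) - v i
  have hcoef (i : Fin (n + 1)) : (⌊z i⌋ : ℝ) + decrng (fun j => (v j : ℝ)) i =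
      ((⌊z i⌋ + v i - if i ∈ S then 1 else 0 : ℤ) : ℝ) := by
    simp only [decrng]; split_ifs <;> push_cast <;> ring
  have hold : (∑ i, z i • b i) - ∑ i, ((⌊z i⌋ : ℝ) + (v i : ℝ)) • b i = ∑ i, t i • b i := by
    simp only [t, ← sum_sub_distrib, ← sub_smul, Int.fract]; congr! 2; ring
  have hnew : (∑ i, z i • b i) - ∑ i, ((⌊z i⌋ : ℝ) + decrng (fun j => (v j : ℝ)) i) • b i =
      ∑ i, t i • b i + ∑ i, s i • b i := by
    simp only [t, s, decrng, ← sum_sub_distrib, ← sum_add_distrib, ← sub_smul, ← add_smul,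
      Int.fract]
    congr! 2; ring
  have htwo : (2 : ℝ) • ∑ i, t i • b i + ∑ i, s i • b i = ∑ i, (2 * t i + s i) • b i := by
    simp only [smul_sum, smul_smul, ← sum_add_distrib, ← add_smul]
  refine ⟨?_, fun x' hx' => (hold ▸ hclosest.2 x' hx').trans' ?_⟩
  · simp_rw [hcoef, hΛ]
    exact exists_sum_castSucc_eq_sum_of_sum_eq_zero hsum _
  · rw [hnew]
    refine norm_add_le_norm_of_inner_two_smul_add_nonpos ?_
    rw [htwo]
    exact inner_sum_smul_nonpos_of_antivary hsum hobtuse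
      (antivary_two_mul_sub_add_indicator_subr _ _ (fun i => Int.fract_nonneg _)
        fun i => Int.fract_lt_one _)

/-- for a lattice of Voronoi's first kind with obtuse superbasis
`b_1, …, b_{n+1}`, if `B(⌊z⌋ + v)` is a closest lattice point to `y = Bz` then so is
`B(⌊z⌋ + decrng(v))`. -/
theorem decrng_preserves_closest_point
    (n m : ℕ) (b : Fin (n + 1) → EuclideanSpace ℝ (Fin m))
    (hb : LinearIndependent ℝ (fun i : Fin n => b i.castSucc))
    (Λ : Set (EuclideanSpace ℝ (Fin m)))
    (hΛ : Λ = {x | ∃ u : Fin n → ℤ, x = ∑ i, (u i : ℝ) • b i.castSucc})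
    (hsum : ∑ i, b i = 0)
    (hobtuse : ∀ i j, i ≠ j → ⟪b i, b j⟫ ≤ 0)
    (z : Fin (n + 1) → ℝ) (v : Fin (n + 1) → ℤ)
    (hclosest : (∑ i, ((⌊z i⌋ : ℝ) + (v i : ℝ)) • b i) ∈ Λ ∧
      ∀ x' ∈ Λ, ‖(∑ i, z i • b i) - ∑ i, ((⌊z i⌋ : ℝ) + (v i : ℝ)) • b i‖ ≤
        ‖(∑ i, z i • b i) - x'‖) :
    (∑ i, ((⌊z i⌋ : ℝ) + decrng (fun j => (v j : ℝ)) i) • b i) ∈ Λ ∧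
      ∀ x' ∈ Λ, ‖(∑ i, z i • b i) - ∑ i, ((⌊z i⌋ : ℝ) + decrng (fun j => (v j : ℝ)) i) • b i‖ ≤
        ‖(∑ i, z i • b i) - x'‖ :=
  decrng_preserves_closest_point_general n m b Λ hΛ hsum hobtuse z v hclosest
end

section
/- Let Λ be an n-dimensional lattice of Voronoi's first kind in ℝ^m with obtuse superbasis b_1, …, b_{n+1}, let B be the linear map sending w ∈ ℝ^{n+1} to ∑_{i=1}^{n+1} w_i b_i, and let z ∈ ℝ^{n+1}. Then there exists v ∈ ℤ^{n+1} with rng(v) ≤ n such that B(⌊z⌋ + v) is a closest lattice point of Λ to y = Bz, where ⌊z⌋ denotes the componentwise floor of z. -/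
/-!
Write `r = fract z ∈ [0,1)^{n+1}`, so that `y - B(⌊z⌋ + v) = B(r - v)`. If `rng v > n`, some integer
`c` strictly between `min v` and `max v` is not a value of `v`; lowering every `v i > c` by one
strictly decreases `rng v`, and does not increase `‖B(r - v)‖` by Selling's formula
`⟪Ba, Bu⟫ = -½ ∑ᵢⱼ qᵢⱼ (aᵢ - aⱼ)(uᵢ - uⱼ)` together with `qᵢⱼ ≤ 0`. Since `∑ bᵢ = 0`, every
lattice point is `B(⌊z⌋ + v)` for an integer `v`, and `B` kills constant vectors, so a closest
lattice point can be found among the finitely many `B(⌊z⌋ + v)` with `v ∈ {0, …, n}^{n+1}`.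
-/

open scoped RealInnerProductSpace

open Finset

def decAbove {ι : Type*} (c : ℤ) (v : ι → ℤ) : ι → ℤ := fun i => if c < v i then v i - 1 else v i

section Range

variable {ι : Type*} [Fintype ι] [Nonempty ι]

def rng (v : ι → ℤ) : ℤ := univ.sup' univ_nonempty v - univ.inf' univ_nonempty v

theorem exists_gap_of_card_le_rng {v : ι → ℤ} (h : (Fintype.card ι : ℤ) ≤ rng v) :
    ∃ c ∉ Set.range v, univ.inf' univ_nonempty v < c ∧ c < univ.sup' univ_nonempty v := by
  classical
  have hcard :
      #(univ.image v) < #(Icc (univ.inf' univ_nonempty v) (univ.sup' univ_nonempty v)) := by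
    have := card_image_le (s := univ) (f := v)
    rw [card_univ] at this
    rw [rng] at h
    rw [Int.card_Icc]
    omega
  obtain ⟨c, hc, hcv⟩ := exists_mem_notMem_of_card_lt_card hcard
  rw [mem_Icc] at hc
  replace hcv : c ∉ Set.range v := by simpa using hcv
  obtain ⟨i, -, hi⟩ := exists_mem_eq_inf' univ_nonempty v
  obtain ⟨j, -, hj⟩ := exists_mem_eq_sup' univ_nonempty v
  refine ⟨c, hcv, hc.1.lt_of_ne ?_, hc.2.lt_of_ne ?_⟩
  · rintro rfl; exact hcv ⟨i, hi.symm⟩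
  · rintro rfl; exact hcv ⟨j, hj.symm⟩

theorem rng_lt_of_gap {v : ι → ℤ} {c : ℤ} (hc : c ∉ Set.range v)
    (hlo : univ.inf' univ_nonempty v < c) (hhi : c < univ.sup' univ_nonempty v) :
    rng (decAbove c v) < rng v := by
  have hsup : univ.sup' univ_nonempty (decAbove c v) < univ.sup' univ_nonempty v := by
    refine (sup'_lt_iff _).2 fun i _ => ?_
    have := le_sup' v (mem_univ i)
    have : v i ≠ c := fun h => hc ⟨i, h⟩
    unfold decAbove
    split_ifs <;> omega
  have hinf : univ.inf' univ_nonempty v ≤ univ.inf' univ_nonempty (decAbove c v) := by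
    refine le_inf' _ _ fun i _ => ?_
    have := inf'_le v (mem_univ i)
    unfold decAbove
    split_ifs <;> omega
  unfold rng
  omega

theorem rng_coe_fin_lt {N : ℕ} (k : ι → Fin N) : rng (fun i => ((k i : ℕ) : ℤ)) < N := by
  have hsup : univ.sup' univ_nonempty (fun i => (k i : ℤ)) < N :=
    (sup'_lt_iff _).2 fun i _ => by exact_mod_cast (k i).isLt
  have hinf : 0 ≤ univ.inf' univ_nonempty (fun i => (k i : ℤ)) :=
    le_inf' _ _ fun i _ => Int.natCast_nonneg _
  unfold rng
  omega

theorem exists_fin_eq_inf'_add {N : ℕ} {v : ι → ℤ} (h : rng v < N) :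
    ∃ k : ι → Fin N, ∀ i, v i = univ.inf' univ_nonempty v + k i := by
  have hle : ∀ i, univ.inf' univ_nonempty v ≤ v i := fun i => inf'_le v (mem_univ i)
  have hlt : ∀ i, v i - univ.inf' univ_nonempty v < N := fun i => by
    have := le_sup' v (mem_univ i)
    unfold rng at h
    omega
  refine ⟨fun i => ⟨(v i - univ.inf' univ_nonempty v).toNat, ?_⟩, fun i => ?_⟩
  · have := hle i
    have := hlt i
    omega
  · have := hle i
    simp only
    omega

end Range

section Superbasis

variable {ι E : Type*} [Fintype ι] [NormedAddCommGroup E] [InnerProductSpace ℝ E] {b : ι → E}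

theorem inner_sum_smul_sum_smul_of_sum_vec_eq_zero (hb : ∑ i, b i = 0) (a u : ι → ℝ) :
    ⟪∑ i, a i • b i, ∑ j, u j • b j⟫ =
      -(∑ i, ∑ j, (a i - a j) * (u i - u j) * ⟪b i, b j⟫) / 2 := by
  have hrow : ∀ i, ∑ j, ⟪b i, b j⟫ = 0 := fun i => by rw [← inner_sum, hb, inner_zero_right]
  have hcol : ∀ j, ∑ i, ⟪b i, b j⟫ = 0 := fun j => by rw [← sum_inner, hb, inner_zero_left]
  have hexpand : ⟪∑ i, a i • b i, ∑ j, u j • b j⟫ = ∑ i, ∑ j, a i * u j * ⟪b i, b j⟫ := by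
    rw [sum_inner]
    refine sum_congr rfl fun i _ => ?_
    rw [real_inner_smul_left, inner_sum, mul_sum]
    refine sum_congr rfl fun j _ => ?_
    rw [real_inner_smul_right]
    ring
  have hdiag : ∑ i, ∑ j, (a i * u i + a j * u j) * ⟪b i, b j⟫ = 0 := by
    simp only [add_mul, sum_add_distrib, ← mul_sum, hrow, mul_zero, zero_add]
    rw [sum_comm]
    simp only [← mul_sum, hcol, mul_zero, sum_const_zero]
  have hswap : ∑ i, ∑ j, a j * u i * ⟪b i, b j⟫ = ∑ i, ∑ j, a i * u j * ⟪b i, b j⟫ := by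
    rw [sum_comm]
    exact sum_congr rfl fun i _ => sum_congr rfl fun j _ => by rw [real_inner_comm]
  have hsplit : ∑ i, ∑ j, (a i - a j) * (u i - u j) * ⟪b i, b j⟫ =
      ∑ i, ∑ j, (a i * u i + a j * u j) * ⟪b i, b j⟫ -
        (∑ i, ∑ j, a i * u j * ⟪b i, b j⟫ + ∑ i, ∑ j, a j * u i * ⟪b i, b j⟫) := by
    simp only [← sum_add_distrib, ← sum_sub_distrib]
    exact sum_congr rfl fun i _ => sum_congr rfl fun j _ => by ring
  rw [hsplit, hdiag, hswap, hexpand]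
  ring

theorem norm_sum_add_indicator_smul_le (hb : ∑ i, b i = 0)
    (hobtuse : Pairwise fun i j => ⟪b i, b j⟫ ≤ 0) (d : ι → ℝ) (T : Set ι)
    (hgap : ∀ i ∉ T, ∀ j ∈ T, 1 / 2 ≤ d i - d j) :
    ‖∑ i, (d i + T.indicator 1 i) • b i‖ ≤ ‖∑ i, d i • b i‖ := by
  set u : ι → ℝ := T.indicator 1
  set x := ∑ i, d i • b i
  set w := ∑ i, u i • b i
  -- `‖x + w‖² - ‖x‖² = ⟪2x + w, w⟫`, a Selling sum whose terms all have `qᵢⱼ ≤ 0` and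
  -- `(2dᵢ + uᵢ - 2dⱼ - uⱼ)(uᵢ - uⱼ) ≤ 0` by the gap condition.
  have hterm : ∀ i j, 0 ≤ (2 * d i + u i - (2 * d j + u j)) * (u i - u j) * ⟪b i, b j⟫ := by
    intro i j
    rcases eq_or_ne i j with rfl | hij
    · simp
    have hq := hobtuse hij
    have hmem {k} (hk : k ∈ T) : u k = 1 := Set.indicator_of_mem hk _
    have hnotMem {k} (hk : k ∉ T) : u k = 0 := Set.indicator_of_notMem hk _
    by_cases hi : i ∈ T <;> by_cases hj : j ∈ T
    · simp [hmem hi, hmem hj]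
    · have := hgap j hj i hi
      rw [hmem hi, hnotMem hj]
      nlinarith
    · have := hgap i hi j hj
      rw [hnotMem hi, hmem hj]
      nlinarith
    · simp [hnotMem hi, hnotMem hj]
  have hinner : ⟪(2 : ℝ) • x + w, w⟫ ≤ 0 := by
    have : (2 : ℝ) • x + w = ∑ i, (2 * d i + u i) • b i := by
      simp only [x, w, smul_sum, smul_smul, ← sum_add_distrib, add_smul]
    rw [this, inner_sum_smul_sum_smul_of_sum_vec_eq_zero hb]
    have := sum_nonneg fun i (_ : i ∈ univ) => sum_nonneg fun j (_ : j ∈ univ) => hterm i j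
    linarith
  have hsq : ‖x + w‖ ^ 2 ≤ ‖x‖ ^ 2 := by
    rw [← real_inner_self_eq_norm_sq, ← real_inner_self_eq_norm_sq]
    rw [inner_add_left, real_inner_smul_left] at hinner
    rw [inner_add_add_self, real_inner_comm x w]
    linarith
  have hxw : ∑ i, (d i + u i) • b i = x + w := by simp only [x, w, add_smul, sum_add_distrib]
  rw [hxw]
  exact (sq_le_sq₀ (norm_nonneg _) (norm_nonneg _)).mp hsq

theorem sum_add_const_smul_of_sum_eq_zero (hb : ∑ i, b i = 0) (a : ι → ℝ) (t : ℝ) :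
    ∑ i, (a i + t) • b i = ∑ i, a i • b i := by
  simp only [add_smul, sum_add_distrib, ← smul_sum, hb, smul_zero, add_zero]

theorem norm_sum_sub_decAbove_smul_le (hb : ∑ i, b i = 0)
    (hobtuse : Pairwise fun i j => ⟪b i, b j⟫ ≤ 0) {r : ι → ℝ} (hr : ∀ i, r i ∈ Set.Ico 0 1)
    {v : ι → ℤ} {c : ℤ} (hc : c ∉ Set.range v) :
    ‖∑ i, (r i - decAbove c v i) • b i‖ ≤ ‖∑ i, (r i - v i) • b i‖ := by
  set T : Set ι := {i | c < v i}
  have hgap : ∀ i ∉ T, ∀ j ∈ T, 1 / 2 ≤ (r i - v i) - (r j - v j) := by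
    intro i hi j hj
    have hvij : v i + 2 ≤ v j := by
      have : v i ≠ c := fun h => hc ⟨i, h⟩
      simp only [T, Set.mem_ofPred_eq] at hi hj
      omega
    have : ((v i + 2 : ℤ) : ℝ) ≤ v j := by exact_mod_cast hvij
    push_cast at this
    linarith [(hr i).1, (hr j).2]
  convert norm_sum_add_indicator_smul_le hb hobtuse (fun i => r i - v i) T hgap using 4 with i
  by_cases hi : c < v i
  · simp only [decAbove, hi, ↓reduceIte, Int.cast_sub, Int.cast_one, Set.mem_ofPred_eq,
      Set.indicator_of_mem, Pi.one_apply, T]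
    ring
  · simp [decAbove, hi, T]

theorem exists_rng_lt_card_norm_sum_sub_smul_le [Nonempty ι] (hb : ∑ i, b i = 0)
    (hobtuse : Pairwise fun i j => ⟪b i, b j⟫ ≤ 0) {r : ι → ℝ} (hr : ∀ i, r i ∈ Set.Ico 0 1)
    (v : ι → ℤ) :
    ∃ v' : ι → ℤ, rng v' < Fintype.card ι ∧
      ‖∑ i, (r i - v' i) • b i‖ ≤ ‖∑ i, (r i - v i) • b i‖ := by
  induction h : (rng v).toNat using Nat.strong_induction_on generalizing v with
  | _ k ih =>
    by_cases hv : rng v < Fintype.card ι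
    · exact ⟨v, hv, le_rfl⟩
    obtain ⟨c, hc, hlo, hhi⟩ := exists_gap_of_card_le_rng (not_lt.1 hv)
    have hlt := rng_lt_of_gap hc hlo hhi
    have hpos : 0 < Fintype.card ι := Fintype.card_pos
    obtain ⟨v', hv', hnorm⟩ := ih _ (by omega) (decAbove c v) rfl
    exact ⟨v', hv', hnorm.trans (norm_sum_sub_decAbove_smul_le hb hobtuse hr hc)⟩

end Superbasis

theorem exists_int_sum_smul_castSucc_iff {M : Type*} [AddCommGroup M] [Module ℝ M] {n : ℕ}
    {b : Fin (n + 1) → M} (hb : ∑ i, b i = 0) (x : M) :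
    (∃ u : Fin n → ℤ, x = ∑ i, (u i : ℝ) • b i.castSucc) ↔
      ∃ w : Fin (n + 1) → ℤ, x = ∑ i, (w i : ℝ) • b i := by
  have hlast : b (Fin.last n) = -∑ i : Fin n, b i.castSucc := by
    rw [Fin.sum_univ_castSucc, add_comm] at hb
    exact eq_neg_of_add_eq_zero_left hb
  constructor
  · rintro ⟨u, rfl⟩
    exact ⟨Fin.snoc u 0, by simp [Fin.sum_univ_castSucc]⟩
  · rintro ⟨w, rfl⟩
    refine ⟨fun i => w i.castSucc - w (Fin.last n), ?_⟩
    rw [Fin.sum_univ_castSucc, hlast, smul_neg, smul_sum, ← sub_eq_add_neg, ← sum_sub_distrib]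
    exact sum_congr rfl fun i _ => by rw [Int.cast_sub, sub_smul]

theorem exists_closest_point_small_rng_general
    (n m : ℕ) (b : Fin (n + 1) → EuclideanSpace ℝ (Fin m))
    (Λ : Set (EuclideanSpace ℝ (Fin m)))
    (hΛ : Λ = {x | ∃ u : Fin n → ℤ, x = ∑ i, (u i : ℝ) • b i.castSucc})
    (hsum : ∑ i, b i = 0)
    (hobtuse : ∀ i j, i ≠ j → ⟪b i, b j⟫ ≤ 0)
    (z : Fin (n + 1) → ℝ) :
    ∃ v : Fin (n + 1) → ℤ,
      Finset.univ.sup' Finset.univ_nonempty v - Finset.univ.inf' Finset.univ_nonempty v ≤ n ∧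
      (∑ i, ((⌊z i⌋ : ℝ) + (v i : ℝ)) • b i) ∈ Λ ∧
      ∀ x' ∈ Λ, ‖(∑ i, z i • b i) - ∑ i, ((⌊z i⌋ : ℝ) + (v i : ℝ)) • b i‖ ≤
        ‖(∑ i, z i • b i) - x'‖ := by
  have hr : ∀ i, Int.fract (z i) ∈ Set.Ico 0 1 := fun i => ⟨Int.fract_nonneg _, Int.fract_lt_one _⟩
  have hsub : ∀ w : Fin (n + 1) → ℤ, ∑ i, z i • b i - ∑ i, ((⌊z i⌋ : ℝ) + w i) • b i =
      ∑ i, (Int.fract (z i) - w i) • b i := fun w => by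
    rw [← sum_sub_distrib]
    exact sum_congr rfl fun i _ => by rw [← sub_smul, Int.fract]; congr 1; ring
  have hΛ' : ∀ x, x ∈ Λ ↔ ∃ w : Fin (n + 1) → ℤ, x = ∑ i, (w i : ℝ) • b i := fun x => by
    rw [hΛ, Set.mem_ofPred_eq, exists_int_sum_smul_castSucc_iff hsum]
  -- Up to a constant vector, which `B` kills, every `v` with `rng v ≤ n` takes values in
  -- `{0, …, n}`, so it suffices to minimize over `Fin (n + 1) → Fin (n + 1)`.
  obtain ⟨k₀, hk₀⟩ := Finite.exists_min fun k : Fin (n + 1) → Fin (n + 1) =>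
    ‖∑ i, (Int.fract (z i) - ((k i : ℤ) : ℝ)) • b i‖
  have hrng := rng_coe_fin_lt k₀
  push_cast at hrng
  refine ⟨fun i => ((k₀ i : ℕ) : ℤ), Int.lt_add_one_iff.1 hrng,
    (hΛ' _).2 ⟨fun i => ⌊z i⌋ + k₀ i, by simp⟩, fun x' hx' => ?_⟩
  obtain ⟨w, rfl⟩ := (hΛ' x').1 hx'
  obtain ⟨v, hv, hnorm⟩ :=
    exists_rng_lt_card_norm_sum_sub_smul_le hsum hobtuse hr fun i => w i - ⌊z i⌋
  obtain ⟨k, hk⟩ := exists_fin_eq_inf'_add (N := n + 1) (by rwa [Fintype.card_fin] at hv)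
  calc _ = ‖∑ i, (Int.fract (z i) - ((k₀ i : ℕ) : ℤ)) • b i‖ := by rw [hsub]
    _ ≤ ‖∑ i, (Int.fract (z i) - ((k i : ℕ) : ℤ)) • b i‖ := hk₀ k
    _ = ‖∑ i, (Int.fract (z i) - v i) • b i‖ := by
      rw [← sum_add_const_smul_of_sum_eq_zero hsum _ (-((univ.inf' univ_nonempty v : ℤ) : ℝ))]
      exact congrArg _ (sum_congr rfl fun i _ => by rw [hk i]; push_cast; ring_nf)
    _ ≤ ‖∑ i, (Int.fract (z i) - ((w i - ⌊z i⌋ : ℤ) : ℝ)) • b i‖ := hnorm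
    _ = _ := by rw [← hsub]; simp

/-- for a lattice of Voronoi's first kind with obtuse superbasis
`b_1, …, b_{n+1}` and any `z ∈ ℝ^{n+1}`, there exists `v ∈ ℤ^{n+1}` with
`rng(v) = max(v) − min(v) ≤ n` such that `B(⌊z⌋ + v)` is a closest lattice point
to `y = Bz`. -/
theorem exists_closest_point_small_rng
    (n m : ℕ) (b : Fin (n + 1) → EuclideanSpace ℝ (Fin m))
    (hb : LinearIndependent ℝ (fun i : Fin n => b i.castSucc))
    (Λ : Set (EuclideanSpace ℝ (Fin m)))
    (hΛ : Λ = {x | ∃ u : Fin n → ℤ, x = ∑ i, (u i : ℝ) • b i.castSucc})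
    (hsum : ∑ i, b i = 0)
    (hobtuse : ∀ i j, i ≠ j → ⟪b i, b j⟫ ≤ 0)
    (z : Fin (n + 1) → ℝ) :
    ∃ v : Fin (n + 1) → ℤ,
      Finset.univ.sup' Finset.univ_nonempty v - Finset.univ.inf' Finset.univ_nonempty v ≤ n ∧
      (∑ i, ((⌊z i⌋ : ℝ) + (v i : ℝ)) • b i) ∈ Λ ∧
      ∀ x' ∈ Λ, ‖(∑ i, z i • b i) - ∑ i, ((⌊z i⌋ : ℝ) + (v i : ℝ)) • b i‖ ≤
        ‖(∑ i, z i • b i) - x'‖ :=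
  exists_closest_point_small_rng_general n m b Λ hΛ hsum hobtuse z
end

section
/- Let Λ be an n-dimensional lattice of Voronoi's first kind in ℝ^m with obtuse superbasis b_1, …, b_{n+1}, let B be the linear map sending w ∈ ℝ^{n+1} to ∑_{i=1}^{n+1} w_i b_i, and let z ∈ ℝ^{n+1}. Define the sequence u_0, u_1, u_2, … in ℤ^{n+1} by u_0 = ⌊z⌋ (componentwise floor) and u_{k+1} = u_k + t_k, where t_k ∈ {0,1}^{n+1} is any minimizer of ‖B(z − u_k − t)‖² over t ∈ {0,1}^{n+1}. Then there exists K ≤ n such that B u_K is a closest lattice point of Λ to y = Bz. -/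
/-!
For integer coefficient vectors `w` let `f w = ‖B z - B w‖²`. Since the `b i` sum to zero, `f` is
invariant under adding a constant vector; since they are pairwise obtuse, `f` is submodular for the
componentwise `⊔` and `⊓`: `f (x ⊔ y) + f (x ⊓ y) - f x - f y = 2 ⟪B p, B q⟫ ≤ 0`, where
`p = x - x ⊓ y` and `q = y - x ⊓ y` are nonnegative with disjoint supports.

Lowering by one every coordinate at which `w - ⌊z⌋` exceeds a value it omits does not increase `f`,
so by pigeonhole every `w` can be pushed into the box `⌊z⌋ + {0, …, n}`, where `f` then has a global
minimiser. If a global minimiser `v` satisfies `u k ≤ v ≤ u k + (M + 1)`, exchanging `v - M` with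
`u (k + 1)` through `⊓`, and then the result with `u (k + 1)` through `⊔`, each time against the
minimality of `u (k + 1)` on `u k + {0, 1}ⁿ⁺¹`, yields a global minimiser between `u (k + 1)` and
`u (k + 1) + M`. After `n` steps this box is the single point `u n`.
-/

open scoped RealInnerProductSpace

open Finset

def IsSubmodular {α β : Type*} [Lattice α] [Add β] [LE β] (f : α → β) : Prop :=
  ∀ x y, f (x ⊔ y) + f (x ⊓ y) ≤ f x + f y

section Lattice

variable {α β : Type*} [Lattice α] [AddCommMonoid β] [PartialOrder β]
  [IsOrderedCancelAddMonoid β]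

theorem IsSubmodular.isMinOn_inf {f : α → β} (hf : IsSubmodular f) {s : Set α} {x y : α}
    (hx : IsMinOn f Set.univ x) (hy : IsMinOn f s y) (hxy : x ⊔ y ∈ s) :
    IsMinOn f Set.univ (x ⊓ y) := by
  refine isMinOn_univ_iff.2 fun w => le_of_add_le_add_left (a := f (x ⊔ y)) ?_
  calc f (x ⊔ y) + f (x ⊓ y) ≤ f x + f y := hf x y
    _ ≤ f w + f (x ⊔ y) := add_le_add (isMinOn_univ_iff.1 hx w) (isMinOn_iff.1 hy _ hxy)
    _ = f (x ⊔ y) + f w := add_comm _ _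

theorem IsSubmodular.isMinOn_sup {f : α → β} (hf : IsSubmodular f) {s : Set α} {x y : α}
    (hx : IsMinOn f Set.univ x) (hy : IsMinOn f s y) (hxy : x ⊓ y ∈ s) :
    IsMinOn f Set.univ (x ⊔ y) := by
  refine isMinOn_univ_iff.2 fun w => le_of_add_le_add_right (a := f (x ⊓ y)) ?_
  calc f (x ⊔ y) + f (x ⊓ y) ≤ f x + f y := hf x y
    _ ≤ f w + f (x ⊓ y) := add_le_add (isMinOn_univ_iff.1 hx w) (isMinOn_iff.1 hy _ hxy)

end Lattice

section IntegerVectors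

variable {ι β : Type*} [AddCommMonoid β] [PartialOrder β] [IsOrderedCancelAddMonoid β]
  {f : (ι → ℤ) → β}

theorem exists_isMinOn_mem_Icc_of_isMinOn_Icc (hf : IsSubmodular f)
    (hshift : ∀ w c, f (w + fun _ => c) = f w) {u v y : ι → ℤ} {M : ℕ}
    (hv : IsMinOn f Set.univ v) (hvu : v ∈ Set.Icc u (u + ↑(M + 1)))
    (hy : IsMinOn f (Set.Icc u (u + 1)) y) (hyu : y ∈ Set.Icc u (u + 1)) :
    ∃ v' ∈ Set.Icc y (y + ↑M), IsMinOn f Set.univ v' := by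
  have isMinOn_shift : ∀ v c, IsMinOn f Set.univ v → IsMinOn f Set.univ (v + fun _ => c) :=
    fun v c hv => isMinOn_univ_iff.2 fun w => (hshift v c).trans_le (isMinOn_univ_iff.1 hv w)
  simp only [Set.mem_Icc, Pi.le_def, Pi.add_apply, Pi.natCast_apply, Pi.one_apply] at hvu hyu
  set x := v + fun _ => -(M : ℤ)
  have hxy : IsMinOn f Set.univ (x ⊓ y) := by
    refine hf.isMinOn_inf (isMinOn_shift _ _ hv) hy ⟨fun i => ?_, fun i => ?_⟩ <;>
    · simp only [x, Pi.sup_apply, Pi.add_apply, Pi.one_apply]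
      grind
  set v₁ := x ⊓ y + fun _ => (M : ℤ)
  refine ⟨v₁ ⊔ y, ⟨fun i => ?_, fun i => ?_⟩,
    hf.isMinOn_sup (isMinOn_shift _ _ hxy) hy ⟨fun i => ?_, fun i => ?_⟩⟩ <;>
  · simp only [v₁, x, Pi.sup_apply, Pi.inf_apply, Pi.add_apply, Pi.one_apply, Pi.natCast_apply]
    grind

theorem isMinOn_of_iterate_isMinOn_Icc (hf : IsSubmodular f)
    (hshift : ∀ w c, f (w + fun _ => c) = f w) {u : ℕ → ι → ℤ}
    (hu : ∀ k, u (k + 1) ∈ Set.Icc (u k) (u k + 1) ∧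
      IsMinOn f (Set.Icc (u k) (u k + 1)) (u (k + 1)))
    {M : ℕ} {v : ι → ℤ} (hv : IsMinOn f Set.univ v) (hvu : v ∈ Set.Icc (u 0) (u 0 + ↑M)) :
    IsMinOn f Set.univ (u M) := by
  have key : ∀ k ≤ M, ∃ v ∈ Set.Icc (u k) (u k + ↑(M - k)), IsMinOn f Set.univ v := by
    intro k hk
    induction k with
    | zero => exact ⟨v, hvu, hv⟩
    | succ k ih =>
      obtain ⟨v, hvu, hv⟩ := ih (by omega)
      rw [show M - k = M - (k + 1) + 1 by omega] at hvu
      exact exists_isMinOn_mem_Icc_of_isMinOn_Icc hf hshift hv hvu (hu k).2 (hu k).1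
  obtain ⟨v, hvu, hv⟩ := key M le_rfl
  rw [Nat.sub_self, Nat.cast_zero, add_zero, Set.Icc_self, Set.mem_singleton_iff] at hvu
  rwa [← hvu]

theorem add_mem_Icc_add_one_iff (u t : ι → ℤ) :
    u + t ∈ Set.Icc u (u + 1) ↔ ∀ i, t i = 0 ∨ t i = 1 := by
  simp only [Set.mem_Icc, Pi.le_def, Pi.add_apply, Pi.one_apply, ← forall_and]
  exact forall_congr' fun i => by omega

end IntegerVectors

theorem exists_mem_Icc_forall_ne {ι : Type*} [Fintype ι] (d : ι → ℤ) {M : ℕ}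
    (hM : Fintype.card ι ≤ M) : ∃ c ∈ Icc (0 : ℤ) M, ∀ i, d i ≠ c := by
  classical
  obtain ⟨c, hc, hcd⟩ := exists_mem_notMem_of_card_lt_card (s := univ.image d) (t := Icc 0 M) <| by
    rw [Int.card_Icc]
    have := card_image_le (s := univ) (f := d)
    rw [card_univ] at this
    omega
  exact ⟨c, hc, fun i hi => hcd (mem_image.2 ⟨i, mem_univ i, hi⟩)⟩

section Superbasis

variable {ι E : Type*} [Fintype ι] [NormedAddCommGroup E] [InnerProductSpace ℝ E] {b : ι → E}

theorem two_mul_inner_sum_smul (hsum : ∑ i, b i = 0) (x y : ι → ℝ) :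
    2 * ⟪∑ i, x i • b i, ∑ i, y i • b i⟫ =
      -∑ i, ∑ j, ⟪b i, b j⟫ * ((x i - x j) * (y i - y j)) := by
  have hdiag : ∑ i, ∑ j, x i * y i * ⟪b i, b j⟫ = 0 := by
    simp only [← mul_sum, ← inner_sum, hsum, inner_zero_right, mul_zero, sum_const_zero]
  have hdiag' : ∑ i, ∑ j, x j * y j * ⟪b i, b j⟫ = 0 := by
    rw [sum_comm]
    simp only [← mul_sum, ← sum_inner, hsum, inner_zero_left, mul_zero, sum_const_zero]
  have hxy : ⟪∑ i, x i • b i, ∑ i, y i • b i⟫ = ∑ i, ∑ j, x i * y j * ⟪b i, b j⟫ := by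
    simp only [sum_inner, inner_sum, real_inner_smul_left, real_inner_smul_right]
    rw [sum_comm]
    exact sum_congr rfl fun i _ => sum_congr rfl fun j _ => by ring
  have hyx : ⟪∑ i, x i • b i, ∑ i, y i • b i⟫ = ∑ i, ∑ j, x j * y i * ⟪b i, b j⟫ := by
    rw [hxy, sum_comm]
    simp only [real_inner_comm]
  have hexpand : ∀ i j, ⟪b i, b j⟫ * ((x i - x j) * (y i - y j)) =
      x i * y i * ⟪b i, b j⟫ + x j * y j * ⟪b i, b j⟫ - x i * y j * ⟪b i, b j⟫
        - x j * y i * ⟪b i, b j⟫ := fun i j => by ring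
  simp only [hexpand, sum_add_distrib, sum_sub_distrib, hdiag, hdiag']
  linarith

theorem inner_sum_smul_nonpos_of_antivary_s17 (hsum : ∑ i, b i = 0)
    (hobtuse : ∀ i j, i ≠ j → ⟪b i, b j⟫ ≤ 0) {x y : ι → ℝ} (hxy : Antivary x y) :
    ⟪∑ i, x i • b i, ∑ i, y i • b i⟫ ≤ 0 := by
  have hterm : ∀ i j, 0 ≤ ⟪b i, b j⟫ * ((x i - x j) * (y i - y j)) := by
    intro i j
    rcases eq_or_ne i j with rfl | hij
    · simp
    · exact mul_nonneg_of_nonpos_of_nonpos (hobtuse i j hij) (hxy.sub_mul_sub_nonpos j i)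
  linarith [two_mul_inner_sum_smul hsum x y,
    sum_nonneg fun i (_ : i ∈ univ) => sum_nonneg fun j (_ : j ∈ univ) => hterm i j]

theorem inner_sum_smul_nonpos_of_mul_eq_zero (hobtuse : ∀ i j, i ≠ j → ⟪b i, b j⟫ ≤ 0)
    {x y : ι → ℝ} (hx : ∀ i, 0 ≤ x i) (hy : ∀ i, 0 ≤ y i) (hxy : ∀ i, x i * y i = 0) :
    ⟪∑ i, x i • b i, ∑ i, y i • b i⟫ ≤ 0 := by
  simp only [sum_inner, inner_sum, real_inner_smul_left, real_inner_smul_right]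
  refine sum_nonpos fun i _ => sum_nonpos fun j _ => ?_
  rcases eq_or_ne i j with rfl | hij
  · rw [← mul_assoc, mul_comm (y i), hxy, zero_mul]
  · exact mul_nonpos_of_nonneg_of_nonpos (hy i)
      (mul_nonpos_of_nonneg_of_nonpos (hx j) (hobtuse j i hij.symm))

variable (b) in
noncomputable def sqDist (z : ι → ℝ) (w : ι → ℤ) : ℝ :=
  ‖∑ i, z i • b i - ∑ i, (w i : ℝ) • b i‖ ^ 2

theorem sqDist_add (z : ι → ℝ) (w s : ι → ℤ) :
    sqDist b z (w + s) = ‖∑ i, (z i - w i - s i) • b i‖ ^ 2 := by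
  simp only [sqDist, ← sum_sub_distrib, ← sub_smul, Pi.add_apply, Int.cast_add, sub_sub]

theorem sqDist_add_const (hsum : ∑ i, b i = 0) (z : ι → ℝ) (w : ι → ℤ) (c : ℤ) :
    sqDist b z (w + fun _ => c) = sqDist b z w := by
  simp only [sqDist, Pi.add_apply, Int.cast_add, add_smul, sum_add_distrib, ← smul_sum, hsum,
    smul_zero, add_zero]

theorem sqDist_isSubmodular (hobtuse : ∀ i j, i ≠ j → ⟪b i, b j⟫ ≤ 0) (z : ι → ℝ) :
    IsSubmodular (sqDist b z) := by
  intro x y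
  set a := x ⊓ y
  set P := ∑ i, ((x i - a i : ℤ) : ℝ) • b i with hP
  set Q := ∑ i, ((y i - a i : ℤ) : ℝ) • b i with hQ
  set Y := ∑ i, z i • b i - ∑ i, (a i : ℝ) • b i
  have hsplit : ∀ w : ι → ℤ, ∑ i, (w i : ℝ) • b i =
      ∑ i, (a i : ℝ) • b i + ∑ i, ((w i - a i : ℤ) : ℝ) • b i := fun w => by
    rw [← sum_add_distrib]
    refine sum_congr rfl fun i _ => ?_
    rw [← add_smul, Int.cast_sub, add_sub_cancel]
  have hsup : ∑ i, (((x ⊔ y) i : ℤ) : ℝ) • b i = ∑ i, (a i : ℝ) • b i + (P + Q) := by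
    have hcoef : ∀ i, (x ⊔ y) i - a i = (x i - a i) + (y i - a i) := fun i => by
      simp only [a, Pi.sup_apply, Pi.inf_apply]
      grind
    rw [hsplit, hP, hQ]
    simp only [hcoef, Int.cast_add, add_smul, sum_add_distrib]
  have hPQ : ⟪P, Q⟫ ≤ 0 := by
    refine inner_sum_smul_nonpos_of_mul_eq_zero hobtuse (fun i => ?_) (fun i => ?_) (fun i => ?_)
    all_goals simp only [a, Pi.inf_apply]
    · exact Int.cast_nonneg (sub_nonneg.2 inf_le_left)
    · exact Int.cast_nonneg (sub_nonneg.2 inf_le_right)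
    · rw [← Int.cast_mul, Int.cast_eq_zero]
      rcases le_total (x i) (y i) with h | h <;> simp [h]
  have hx : sqDist b z x = ‖Y - P‖ ^ 2 := by rw [sqDist, hsplit x, sub_add_eq_sub_sub]
  have hy : sqDist b z y = ‖Y - Q‖ ^ 2 := by rw [sqDist, hsplit y, sub_add_eq_sub_sub]
  have hxy : sqDist b z (x ⊔ y) = ‖Y - (P + Q)‖ ^ 2 := by rw [sqDist, hsup, sub_add_eq_sub_sub]
  have ha : sqDist b z (x ⊓ y) = ‖Y‖ ^ 2 := rfl
  rw [hx, hy, hxy, ha]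
  simp only [norm_sub_sq_real, norm_add_sq_real, inner_add_right]
  linarith

theorem sqDist_sub_indicator_le (hsum : ∑ i, b i = 0)
    (hobtuse : ∀ i j, i ≠ j → ⟪b i, b j⟫ ≤ 0) (z : ι → ℝ) (w : ι → ℤ) {c : ℤ}
    (hc : ∀ i, w i - ⌊z i⌋ ≠ c) :
    sqDist b z (w - fun i => if c < w i - ⌊z i⌋ then 1 else 0) ≤ sqDist b z w := by
  set χ : ι → ℝ := fun i => if c < w i - ⌊z i⌋ then 1 else 0
  set Y := ∑ i, z i • b i - ∑ i, (w i : ℝ) • b i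
  set X := ∑ i, χ i • b i
  have hlower : sqDist b z (w - fun i => if c < w i - ⌊z i⌋ then 1 else 0) = ‖Y + X‖ ^ 2 := by
    have : ∀ i, ((w i - if c < w i - ⌊z i⌋ then 1 else 0 : ℤ) : ℝ) = w i - χ i :=
      fun i => by simp only [χ]; split_ifs <;> simp
    simp only [sqDist, Pi.sub_apply, this, sub_smul, sum_sub_distrib, Y, X]
    abel_nf
  -- A lowered and a kept coordinate of `w - ⌊z⌋` differ by at least 2, which the fractional
  -- parts of `z` cannot compensate.
  have hanti : Antivary (fun i => 2 * (z i - w i) + χ i) χ := by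
    intro i j hij
    simp only [χ] at hij ⊢
    split_ifs at hij ⊢ <;> norm_num at hij
    have hgap : w i - ⌊z i⌋ + 2 ≤ w j - ⌊z j⌋ := by grind
    have hgap' : (w i : ℝ) - ⌊z i⌋ + 2 ≤ w j - ⌊z j⌋ := by exact_mod_cast hgap
    linarith [Int.floor_le (z i), Int.lt_floor_add_one (z j)]
  have hinner : ⟪(2 : ℝ) • Y + X, X⟫ ≤ 0 := by
    have : (2 : ℝ) • Y + X = ∑ i, (2 * (z i - w i) + χ i) • b i := by
      simp only [Y, X, add_smul, sum_add_distrib, mul_smul, ← smul_sum, sub_smul, sum_sub_distrib]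
    rw [this]
    exact inner_sum_smul_nonpos_of_antivary_s17 hsum hobtuse hanti
  rw [hlower, sqDist, norm_add_sq_real]
  rw [inner_add_left, real_inner_smul_left, real_inner_self_eq_norm_sq] at hinner
  linarith

theorem exists_sqDist_le_mem_Icc_floor (hsum : ∑ i, b i = 0)
    (hobtuse : ∀ i j, i ≠ j → ⟪b i, b j⟫ ≤ 0) (z : ι → ℝ) (w : ι → ℤ) :
    ∃ w' ∈ Set.Icc (fun i => ⌊z i⌋) ((fun i => ⌊z i⌋) + ↑(Fintype.card ι - 1)),
      sqDist b z w' ≤ sqDist b z w := by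
  suffices key : ∀ M : ℕ, ∀ w, (∀ i, 0 ≤ w i - ⌊z i⌋ ∧ w i - ⌊z i⌋ ≤ M) →
      ∃ w' ∈ Set.Icc (fun i => ⌊z i⌋) ((fun i => ⌊z i⌋) + ↑(Fintype.card ι - 1)),
        sqDist b z w' ≤ sqDist b z w by
    obtain ⟨lo, hlo⟩ := Finite.exists_ge fun i => w i - ⌊z i⌋
    obtain ⟨hi, hhi⟩ := Finite.exists_le fun i => w i - ⌊z i⌋
    obtain ⟨w', hw', hle⟩ := key (hi - lo).toNat (w + fun _ => -lo) fun i => by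
      have := hlo i; have := hhi i
      simp only [Pi.add_apply]
      omega
    exact ⟨w', hw', hle.trans_eq (sqDist_add_const hsum z w (-lo))⟩
  have hsmall : ∀ M ≤ Fintype.card ι - 1, ∀ w, (∀ i, 0 ≤ w i - ⌊z i⌋ ∧ w i - ⌊z i⌋ ≤ M) →
      w ∈ Set.Icc (fun i => ⌊z i⌋) ((fun i => ⌊z i⌋) + ↑(Fintype.card ι - 1)) :=
    fun M hM w hw => ⟨fun i => by grind, fun i => by
      simp only [Pi.add_apply, Pi.natCast_apply]
      grind⟩
  intro M
  induction M with
  | zero => exact fun w hw => ⟨w, hsmall 0 (Nat.zero_le _) w hw, le_rfl⟩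
  | succ M ih =>
    intro w hw
    by_cases hM : M + 1 ≤ Fintype.card ι - 1
    · exact ⟨w, hsmall _ hM w hw, le_rfl⟩
    obtain ⟨c, hc, hne⟩ := exists_mem_Icc_forall_ne (fun i => w i - ⌊z i⌋) (M := M + 1) (by omega)
    rw [mem_Icc] at hc
    obtain ⟨w', hw', hle⟩ := ih (w - fun i => if c < w i - ⌊z i⌋ then 1 else 0) fun i => by
      have := hw i; have := hne i
      simp only [Pi.sub_apply]
      split_ifs <;> omega
    exact ⟨w', hw', hle.trans (sqDist_sub_indicator_le hsum hobtuse z w hne)⟩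

theorem exists_isMinOn_sqDist_mem_Icc_floor (hsum : ∑ i, b i = 0)
    (hobtuse : ∀ i j, i ≠ j → ⟪b i, b j⟫ ≤ 0) (z : ι → ℝ) :
    ∃ v ∈ Set.Icc (fun i => ⌊z i⌋) ((fun i => ⌊z i⌋) + ↑(Fintype.card ι - 1)),
      IsMinOn (sqDist b z) Set.univ v := by
  classical
  obtain ⟨v, hv, hmin⟩ := Set.exists_min_image _ (sqDist b z) (Set.finite_Icc _ _)
    ⟨_, Set.left_mem_Icc.2 (le_add_of_nonneg_right fun _ => Int.natCast_nonneg _)⟩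
  refine ⟨v, hv, isMinOn_univ_iff.2 fun w => ?_⟩
  obtain ⟨w', hw', hle⟩ := exists_sqDist_le_mem_Icc_floor hsum hobtuse z w
  exact (hmin w' hw').trans hle

end Superbasis

theorem sum_smul_eq_sum_castSucc {n : ℕ} {E : Type*} [AddCommGroup E] [Module ℝ E]
    {b : Fin (n + 1) → E} (hsum : ∑ i, b i = 0) (w : Fin (n + 1) → ℤ) :
    ∑ i, (w i : ℝ) • b i =
      ∑ i : Fin n, ((w i.castSucc - w (Fin.last n) : ℤ) : ℝ) • b i.castSucc := by
  have hlast : b (Fin.last n) = -∑ i : Fin n, b i.castSucc := by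
    rw [Fin.sum_univ_castSucc] at hsum
    exact eq_neg_of_add_eq_zero_right hsum
  rw [Fin.sum_univ_castSucc, hlast, smul_neg, smul_sum, ← sub_eq_add_neg, ← sum_sub_distrib]
  simp only [Int.cast_sub, sub_smul]

theorem iteration_terminates_in_n_steps_general
    (n m : ℕ) (b : Fin (n + 1) → EuclideanSpace ℝ (Fin m))
    (Λ : Set (EuclideanSpace ℝ (Fin m)))
    (hΛ : Λ = {x | ∃ u : Fin n → ℤ, x = ∑ i, (u i : ℝ) • b i.castSucc})
    (hsum : ∑ i, b i = 0)
    (hobtuse : ∀ i j, i ≠ j → ⟪b i, b j⟫ ≤ 0)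
    (z : Fin (n + 1) → ℝ)
    (u : ℕ → Fin (n + 1) → ℤ)
    (hu0 : u 0 = fun i => ⌊z i⌋)
    (hstep : ∀ k, ∃ t : Fin (n + 1) → ℤ, (∀ i, t i = 0 ∨ t i = 1) ∧
      u (k + 1) = u k + t ∧
      ∀ s : Fin (n + 1) → ℤ, (∀ i, s i = 0 ∨ s i = 1) →
        ‖∑ i, (z i - (u k i : ℝ) - (t i : ℝ)) • b i‖ ^ 2 ≤
          ‖∑ i, (z i - (u k i : ℝ) - (s i : ℝ)) • b i‖ ^ 2) :
    ∃ K ≤ n, (∑ i, (u K i : ℝ) • b i) ∈ Λ ∧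
      ∀ x' ∈ Λ, ‖(∑ i, z i • b i) - ∑ i, (u K i : ℝ) • b i‖ ≤ ‖(∑ i, z i • b i) - x'‖ := by
  have hbox : ∀ k, u (k + 1) ∈ Set.Icc (u k) (u k + 1) ∧
      IsMinOn (sqDist b z) (Set.Icc (u k) (u k + 1)) (u (k + 1)) := by
    intro k
    obtain ⟨t, ht, hut, htmin⟩ := hstep k
    rw [hut]
    refine ⟨(add_mem_Icc_add_one_iff _ _).2 ht, isMinOn_iff.2 fun w hw => ?_⟩
    rw [← add_sub_cancel (u k) w, add_mem_Icc_add_one_iff] at hw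
    have := htmin _ hw
    rwa [← sqDist_add, ← sqDist_add, add_sub_cancel] at this
  obtain ⟨v, hv, hvmin⟩ := exists_isMinOn_sqDist_mem_Icc_floor hsum hobtuse z
  rw [← hu0, Fintype.card_fin, Nat.add_sub_cancel] at hv
  have hmin := isMinOn_of_iterate_isMinOn_Icc (sqDist_isSubmodular hobtuse z)
    (sqDist_add_const hsum z) hbox hvmin hv
  subst hΛ
  refine ⟨n, le_rfl, ⟨_, sum_smul_eq_sum_castSucc hsum (u n)⟩, ?_⟩
  rintro _ ⟨c, rfl⟩
  have hc : ∑ i : Fin n, (c i : ℝ) • b i.castSucc =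
      ∑ i, ((Fin.snoc c 0 : Fin (n + 1) → ℤ) i : ℝ) • b i := by
    simp [Fin.sum_univ_castSucc]
  rw [hc]
  exact (pow_le_pow_iff_left₀ (norm_nonneg _) (norm_nonneg _) two_ne_zero).1
    (isMinOn_univ_iff.1 hmin _)

/-- for a lattice of Voronoi's first kind with obtuse superbasis, the
iteration `u_0 = ⌊z⌋`, `u_{k+1} = u_k + t_k` — where `t_k ∈ {0,1}^{n+1}` minimizes
`‖B(z − u_k − t)‖²` over `t ∈ {0,1}^{n+1}` — reaches a closest lattice point to
`y = Bz` within `n` steps: there is `K ≤ n` with `B u_K` a closest lattice point. -/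
theorem iteration_terminates_in_n_steps
    (n m : ℕ) (b : Fin (n + 1) → EuclideanSpace ℝ (Fin m))
    (hb : LinearIndependent ℝ (fun i : Fin n => b i.castSucc))
    (Λ : Set (EuclideanSpace ℝ (Fin m)))
    (hΛ : Λ = {x | ∃ u : Fin n → ℤ, x = ∑ i, (u i : ℝ) • b i.castSucc})
    (hsum : ∑ i, b i = 0)
    (hobtuse : ∀ i j, i ≠ j → ⟪b i, b j⟫ ≤ 0)
    (z : Fin (n + 1) → ℝ)
    (u : ℕ → Fin (n + 1) → ℤ)
    (hu0 : u 0 = fun i => ⌊z i⌋)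
    (hstep : ∀ k, ∃ t : Fin (n + 1) → ℤ, (∀ i, t i = 0 ∨ t i = 1) ∧
      u (k + 1) = u k + t ∧
      ∀ s : Fin (n + 1) → ℤ, (∀ i, s i = 0 ∨ s i = 1) →
        ‖∑ i, (z i - (u k i : ℝ) - (t i : ℝ)) • b i‖ ^ 2 ≤
          ‖∑ i, (z i - (u k i : ℝ) - (s i : ℝ)) • b i‖ ^ 2) :
    ∃ K ≤ n, (∑ i, (u K i : ℝ) • b i) ∈ Λ ∧
      ∀ x' ∈ Λ, ‖(∑ i, z i • b i) - ∑ i, (u K i : ℝ) • b i‖ ≤ ‖(∑ i, z i • b i) - x'‖ :=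
  iteration_terminates_in_n_steps_general n m b Λ hΛ hsum hobtuse z u hu0 hstep
end

section
/- Let q be a symmetric (n+1)×(n+1) real matrix with q_{ij} ≤ 0 for i ≠ j and with every row summing to zero, and let s ∈ ℝ^{n+1}. Define Q(t) = ∑_{i=1}^{n+1} s_i t_i + ∑_{i=1}^{n+1}∑_{j=1}^{n+1} q_{ij} t_i t_j for t ∈ {0,1}^{n+1}. Define symmetric weights on vertices {0, 1, …, n+2} by: w_{ij} = −q_{ij} for 1 ≤ i, j ≤ n+1; w_{i,n+2} = max(s_i, 0) and w_{0,i} = max(−s_i, 0) for 1 ≤ i ≤ n+1; and w_{0,0} = w_{n+2,n+2} = w_{0,n+2} = 0. Then all weights w_{ij} with i ≠ j are nonnegative, and there exists a constant c (independent of t) such that for every t ∈ {0,1}^{n+1}, the weight W of the cut determined by t — namely W = ∑_{i,j=0}^{n+2} w_{ij} t_i (1 − t_j) with the convention t_0 = 1 and t_{n+2} = 0 — satisfies W = Q(t) + c. Consequently t minimizes Q over {0,1}^{n+1} if and only if the corresponding cut has minimum weight. -/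
/-!
With `t₀ = 1` and `t_{n+2} = 0`, the source row of the cut weight contributes
`∑ max(-sᵢ, 0) (1 - tᵢ)`, the sink row nothing, and an inner row `i` contributes
`max(sᵢ, 0) tᵢ - ∑ⱼ qᵢⱼ tᵢ (1 - tⱼ)`; the zero row sums of `q` turn the latter into
`max(sᵢ, 0) tᵢ + ∑ⱼ qᵢⱼ tᵢ tⱼ`. Since `max(sᵢ, 0) - max(-sᵢ, 0) = sᵢ`, the cut weight is
`Q(t) + ∑ᵢ max(-sᵢ, 0)`, so both problems have the same minimisers.
-/

open Finset

lemma sum_Icc_zero_add_two {M : Type*} [AddCommMonoid M] (n : ℕ) (f : ℕ → M) :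
    ∑ i ∈ Icc 0 (n + 2), f i = f 0 + f (n + 2) + ∑ i ∈ Icc 1 (n + 1), f i := by
  have hsplit : Icc 0 (n + 2) = insert 0 (insert (n + 2) (Icc 1 (n + 1))) := by
    ext i; simp only [mem_Icc, mem_insert]; omega
  rw [hsplit, sum_insert (by simp only [mem_insert, mem_Icc]; omega),
    sum_insert (by simp only [mem_Icc]; omega), add_assoc]

lemma mem_Icc_zero_add_two {n i : ℕ} (hi : i ∈ Icc 0 (n + 2)) :
    i = 0 ∨ i = n + 2 ∨ i ∈ Icc 1 (n + 1) := by
  simp only [mem_Icc] at hi ⊢; omega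

section CutWeight

variable {R : Type*} [CommRing R] [LinearOrder R]
  (n : ℕ) (q : ℕ → ℕ → R) (s : ℕ → R) (w : ℕ → ℕ → R) (t : ℕ → R)

lemma cut_weight_source_row (hw_source : ∀ i ∈ Icc 1 (n + 1), w 0 i = max (-s i) 0)
    (hw00 : w 0 0 = 0) (hw0n : w 0 (n + 2) = 0) (ht0 : t 0 = 1) :
    ∑ j ∈ Icc 0 (n + 2), w 0 j * t 0 * (1 - t j) =
      ∑ j ∈ Icc 1 (n + 1), max (-s j) 0 * (1 - t j) := by
  rw [sum_Icc_zero_add_two, hw00, hw0n, ht0]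
  simp only [zero_mul, zero_add, mul_one]
  exact sum_congr rfl fun j hj => by rw [hw_source j hj]

lemma cut_weight_inner_row (hrows : ∀ i ∈ Icc 1 (n + 1), ∑ j ∈ Icc 1 (n + 1), q i j = 0)
    (hw_mid : ∀ i ∈ Icc 1 (n + 1), ∀ j ∈ Icc 1 (n + 1), w i j = -q i j)
    (hw_sink : ∀ i ∈ Icc 1 (n + 1), w i (n + 2) = max (s i) 0)
    (ht0 : t 0 = 1) (htn : t (n + 2) = 0) {i : ℕ} (hi : i ∈ Icc 1 (n + 1)) :
    ∑ j ∈ Icc 0 (n + 2), w i j * t i * (1 - t j) =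
      max (s i) 0 * t i + ∑ j ∈ Icc 1 (n + 1), q i j * t i * t j := by
  have hinner : ∑ j ∈ Icc 1 (n + 1), w i j * t i * (1 - t j) =
      ∑ j ∈ Icc 1 (n + 1), q i j * t i * t j - (∑ j ∈ Icc 1 (n + 1), q i j) * t i := by
    rw [sum_mul, ← sum_sub_distrib]
    exact sum_congr rfl fun j hj => by rw [hw_mid i hi j hj]; ring
  rw [sum_Icc_zero_add_two, hinner, hrows i hi, ht0, htn, hw_sink i hi]
  ring

lemma max_neg_zero_mul_one_sub_add_max_zero_mul [IsOrderedRing R] (a x : R) :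
    max (-a) 0 * (1 - x) + max a 0 * x = a * x + max (-a) 0 := by
  linear_combination x * max_zero_sub_max_neg_zero_eq_self a

lemma cut_weight_eq [IsOrderedRing R] (hrows : ∀ i ∈ Icc 1 (n + 1), ∑ j ∈ Icc 1 (n + 1), q i j = 0)
    (hw_mid : ∀ i ∈ Icc 1 (n + 1), ∀ j ∈ Icc 1 (n + 1), w i j = -q i j)
    (hw_sink : ∀ i ∈ Icc 1 (n + 1), w i (n + 2) = max (s i) 0)
    (hw_source : ∀ i ∈ Icc 1 (n + 1), w 0 i = max (-s i) 0)
    (hw00 : w 0 0 = 0) (hw0n : w 0 (n + 2) = 0) (ht0 : t 0 = 1) (htn : t (n + 2) = 0) :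
    ∑ i ∈ Icc 0 (n + 2), ∑ j ∈ Icc 0 (n + 2), w i j * t i * (1 - t j) =
      ((∑ i ∈ Icc 1 (n + 1), s i * t i) +
        ∑ i ∈ Icc 1 (n + 1), ∑ j ∈ Icc 1 (n + 1), q i j * t i * t j) +
      ∑ i ∈ Icc 1 (n + 1), max (-s i) 0 := by
  have hsink_row : ∑ j ∈ Icc 0 (n + 2), w (n + 2) j * t (n + 2) * (1 - t j) = 0 :=
    sum_eq_zero fun j _ => by rw [htn]; ring
  have hlinear : ∑ i ∈ Icc 1 (n + 1), (max (-s i) 0 * (1 - t i) + max (s i) 0 * t i) =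
      ∑ i ∈ Icc 1 (n + 1), (s i * t i + max (-s i) 0) :=
    sum_congr rfl fun i _ => max_neg_zero_mul_one_sub_add_max_zero_mul (s i) (t i)
  rw [sum_Icc_zero_add_two, cut_weight_source_row n s w t hw_source hw00 hw0n ht0, hsink_row,
    sum_congr rfl fun i hi => cut_weight_inner_row n q s w t hrows hw_mid hw_sink ht0 htn hi]
  simp only [sum_add_distrib] at hlinear ⊢
  linear_combination hlinear

end CutWeight

lemma cut_weights_nonneg {R : Type*} [AddCommGroup R] [LinearOrder R] [IsOrderedAddMonoid R]
    (n : ℕ) (q : ℕ → ℕ → R) (s : ℕ → R) (w : ℕ → ℕ → R)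
    (hobtuse : ∀ i ∈ Icc 1 (n + 1), ∀ j ∈ Icc 1 (n + 1), i ≠ j → q i j ≤ 0)
    (hwsym : ∀ i ∈ Icc 0 (n + 2), ∀ j ∈ Icc 0 (n + 2), w i j = w j i)
    (hw_mid : ∀ i ∈ Icc 1 (n + 1), ∀ j ∈ Icc 1 (n + 1), w i j = -q i j)
    (hw_sink : ∀ i ∈ Icc 1 (n + 1), w i (n + 2) = max (s i) 0)
    (hw_source : ∀ i ∈ Icc 1 (n + 1), w 0 i = max (-s i) 0) (hw0n : w 0 (n + 2) = 0)
    {i j : ℕ} (hi : i ∈ Icc 0 (n + 2)) (hj : j ∈ Icc 0 (n + 2)) (hij : i ≠ j) :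
    0 ≤ w i j := by
  rcases mem_Icc_zero_add_two hi with rfl | rfl | hi' <;>
    rcases mem_Icc_zero_add_two hj with rfl | rfl | hj'
  · exact absurd rfl hij
  · exact hw0n.ge
  · exact (hw_source j hj').symm ▸ le_max_right _ _
  · exact hwsym _ hi _ hj ▸ hw0n.ge
  · exact absurd rfl hij
  · exact hwsym _ hi _ hj ▸ (hw_sink j hj').symm ▸ le_max_right _ _
  · exact hwsym _ hi _ hj ▸ (hw_source i hi').symm ▸ le_max_right _ _
  · exact (hw_sink i hi').symm ▸ le_max_right _ _
  · exact (hw_mid i hi' j hj').symm ▸ neg_nonneg.mpr (hobtuse i hi' j hj' hij)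

theorem min_binary_quadratic_form_eq_min_cut_general
    (n : ℕ) (q : ℕ → ℕ → ℝ) (s : ℕ → ℝ) (w : ℕ → ℕ → ℝ)
    (hobtuse : ∀ i ∈ Icc 1 (n + 1), ∀ j ∈ Icc 1 (n + 1), i ≠ j → q i j ≤ 0)
    (hrows : ∀ i ∈ Icc 1 (n + 1), ∑ j ∈ Icc 1 (n + 1), q i j = 0)
    (hwsym : ∀ i ∈ Icc 0 (n + 2), ∀ j ∈ Icc 0 (n + 2), w i j = w j i)
    (hw_mid : ∀ i ∈ Icc 1 (n + 1), ∀ j ∈ Icc 1 (n + 1), w i j = -q i j)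
    (hw_sink : ∀ i ∈ Icc 1 (n + 1), w i (n + 2) = max (s i) 0)
    (hw_source : ∀ i ∈ Icc 1 (n + 1), w 0 i = max (-s i) 0)
    (hw00 : w 0 0 = 0) (hw0n : w 0 (n + 2) = 0) :
    (∀ i ∈ Icc 0 (n + 2), ∀ j ∈ Icc 0 (n + 2), i ≠ j → 0 ≤ w i j) ∧
    (∃ c : ℝ, ∀ t : ℕ → ℝ,
      (∀ i ∈ Icc 1 (n + 1), t i = 0 ∨ t i = 1) → t 0 = 1 → t (n + 2) = 0 →
      (∑ i ∈ Icc 0 (n + 2), ∑ j ∈ Icc 0 (n + 2), w i j * t i * (1 - t j)) =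
        ((∑ i ∈ Icc 1 (n + 1), s i * t i) +
          ∑ i ∈ Icc 1 (n + 1), ∑ j ∈ Icc 1 (n + 1), q i j * t i * t j) + c) ∧
    (∀ t : ℕ → ℝ,
      (∀ i ∈ Icc 1 (n + 1), t i = 0 ∨ t i = 1) → t 0 = 1 → t (n + 2) = 0 →
      ((∀ t' : ℕ → ℝ, (∀ i ∈ Icc 1 (n + 1), t' i = 0 ∨ t' i = 1) → t' 0 = 1 →
          t' (n + 2) = 0 →
          (∑ i ∈ Icc 1 (n + 1), s i * t i) +
              (∑ i ∈ Icc 1 (n + 1), ∑ j ∈ Icc 1 (n + 1), q i j * t i * t j) ≤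
            (∑ i ∈ Icc 1 (n + 1), s i * t' i) +
              ∑ i ∈ Icc 1 (n + 1), ∑ j ∈ Icc 1 (n + 1), q i j * t' i * t' j) ↔
        (∀ t' : ℕ → ℝ, (∀ i ∈ Icc 1 (n + 1), t' i = 0 ∨ t' i = 1) → t' 0 = 1 →
          t' (n + 2) = 0 →
          (∑ i ∈ Icc 0 (n + 2), ∑ j ∈ Icc 0 (n + 2), w i j * t i * (1 - t j)) ≤
            ∑ i ∈ Icc 0 (n + 2), ∑ j ∈ Icc 0 (n + 2), w i j * t' i * (1 - t' j)))) := by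
  have hcut := fun t ↦ cut_weight_eq n q s w t hrows hw_mid hw_sink hw_source hw00 hw0n
  refine ⟨fun i hi j hj hij ↦ cut_weights_nonneg n q s w hobtuse hwsym hw_mid hw_sink hw_source
      hw0n hi hj hij, ⟨_, fun t _ ht0 htn ↦ hcut t ht0 htn⟩, fun t _ ht0 htn ↦ ?_⟩
  refine forall_congr' fun t' ↦ imp_congr_right fun _ ↦ imp_congr_right fun ht0' ↦
    imp_congr_right fun htn' ↦ ?_
  rw [hcut t ht0 htn, hcut t' ht0' htn', add_le_add_iff_right]

/-- minimizing the binary quadratic form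
`Q(t) = ∑ s_i t_i + ∑∑ q_{ij} t_i t_j` (with `q` symmetric, obtuse off the diagonal and
with zero row sums) is equivalent to finding a minimum cut in the undirected flow network
on vertices `{0, 1, …, n+2}` with weights `w_{ij} = −q_{ij}` (`1 ≤ i, j ≤ n+1`),
`w_{i,n+2} = max(s_i, 0)`, `w_{0,i} = max(−s_i, 0)` and
`w_{0,0} = w_{n+2,n+2} = w_{0,n+2} = 0`: all off-diagonal weights are nonnegative and the
cut weight `W = ∑_{i,j=0}^{n+2} w_{ij} t_i (1 − t_j)` (with `t_0 = 1`, `t_{n+2} = 0`)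
equals `Q(t) + c` for a constant `c` independent of `t`; hence `t` minimizes `Q` over
`{0,1}^{n+1}` if and only if the corresponding cut has minimum weight. -/
theorem min_binary_quadratic_form_eq_min_cut
    (n : ℕ) (q : ℕ → ℕ → ℝ) (s : ℕ → ℝ) (w : ℕ → ℕ → ℝ)
    (hsym : ∀ i ∈ Icc 1 (n + 1), ∀ j ∈ Icc 1 (n + 1), q i j = q j i)
    (hobtuse : ∀ i ∈ Icc 1 (n + 1), ∀ j ∈ Icc 1 (n + 1), i ≠ j → q i j ≤ 0)
    (hrows : ∀ i ∈ Icc 1 (n + 1), ∑ j ∈ Icc 1 (n + 1), q i j = 0)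
    (hwsym : ∀ i ∈ Icc 0 (n + 2), ∀ j ∈ Icc 0 (n + 2), w i j = w j i)
    (hw_mid : ∀ i ∈ Icc 1 (n + 1), ∀ j ∈ Icc 1 (n + 1), w i j = -q i j)
    (hw_sink : ∀ i ∈ Icc 1 (n + 1), w i (n + 2) = max (s i) 0)
    (hw_source : ∀ i ∈ Icc 1 (n + 1), w 0 i = max (-s i) 0)
    (hw00 : w 0 0 = 0) (hwnn : w (n + 2) (n + 2) = 0) (hw0n : w 0 (n + 2) = 0) :
    (∀ i ∈ Icc 0 (n + 2), ∀ j ∈ Icc 0 (n + 2), i ≠ j → 0 ≤ w i j) ∧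
    (∃ c : ℝ, ∀ t : ℕ → ℝ,
      (∀ i ∈ Icc 1 (n + 1), t i = 0 ∨ t i = 1) → t 0 = 1 → t (n + 2) = 0 →
      (∑ i ∈ Icc 0 (n + 2), ∑ j ∈ Icc 0 (n + 2), w i j * t i * (1 - t j)) =
        ((∑ i ∈ Icc 1 (n + 1), s i * t i) +
          ∑ i ∈ Icc 1 (n + 1), ∑ j ∈ Icc 1 (n + 1), q i j * t i * t j) + c) ∧
    (∀ t : ℕ → ℝ,
      (∀ i ∈ Icc 1 (n + 1), t i = 0 ∨ t i = 1) → t 0 = 1 → t (n + 2) = 0 →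
      ((∀ t' : ℕ → ℝ, (∀ i ∈ Icc 1 (n + 1), t' i = 0 ∨ t' i = 1) → t' 0 = 1 →
          t' (n + 2) = 0 →
          (∑ i ∈ Icc 1 (n + 1), s i * t i) +
              (∑ i ∈ Icc 1 (n + 1), ∑ j ∈ Icc 1 (n + 1), q i j * t i * t j) ≤
            (∑ i ∈ Icc 1 (n + 1), s i * t' i) +
              ∑ i ∈ Icc 1 (n + 1), ∑ j ∈ Icc 1 (n + 1), q i j * t' i * t' j) ↔
        (∀ t' : ℕ → ℝ, (∀ i ∈ Icc 1 (n + 1), t' i = 0 ∨ t' i = 1) → t' 0 = 1 →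
          t' (n + 2) = 0 →
          (∑ i ∈ Icc 0 (n + 2), ∑ j ∈ Icc 0 (n + 2), w i j * t i * (1 - t j)) ≤
            ∑ i ∈ Icc 0 (n + 2), ∑ j ∈ Icc 0 (n + 2), w i j * t' i * (1 - t' j)))) :=
  min_binary_quadratic_form_eq_min_cut_general n q s w hobtuse hrows hwsym hw_mid hw_sink hw_source
    hw00 hw0n
end
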